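/- arXiv:2002.11534 — 6 statements merged into one kernel-verified Lean document; each statement's English description precedes it below -/
import Mathlib

section
/- Let C ∈ ℝ^{m×m} be symmetric positive semidefinite with null space exactly span{1}. Then a point x* ∈ ℝ^d is a global minimizer of F + G over ℝ^d if and only if the matrix 1·(x*)ᵀ belongs to S_KKT. -/
noncomputable section

open Matrix Finset

open scoped MatrixOrder

/-- `ℝ^d` as a Euclidean (inner-product) space. -/
abbrev Vec (d : ℕ) := EuclideanSpace ℝ (Fin d)

/-- Interpret a plain tuple as a Euclidean vector. -/
def toVec {d : ℕ} (x : Fin d → ℝ) : Vec d := (WithLp.equiv 2 (Fin d → ℝ)).symm x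

/-- Interpret a Euclidean vector as a plain tuple. -/
def ofVec {d : ℕ} (x : Vec d) : Fin d → ℝ := (WithLp.equiv 2 (Fin d → ℝ)) x

/-- The matrix `1 · xᵀ` whose rows all equal `x`. -/
def oneOuter (m : ℕ) {d : ℕ} (x : Vec d) : Matrix (Fin m) (Fin d) ℝ :=
  Matrix.of fun _ j => ofVec x j

/-- `f(X) = ∑ i, f_i(x_i)`, where `x_i` is the `i`-th row of `X`. -/
def fMat {m d : ℕ} (f : Fin m → Vec d → ℝ) (X : Matrix (Fin m) (Fin d) ℝ) : ℝ :=
  ∑ i, f i (toVec (X i))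

/-- `g(X) = ∑ i, G(x_i)`. -/
def gMat {m d : ℕ} (G : Vec d → ℝ) (X : Matrix (Fin m) (Fin d) ℝ) : ℝ :=
  ∑ i, G (toVec (X i))

/-- `∇f(X)`: the matrix whose `i`-th row is `∇f_i(x_i)`. -/
def gradMat {m d : ℕ} (gf : Fin m → Vec d → Vec d) (X : Matrix (Fin m) (Fin d) ℝ) :
    Matrix (Fin m) (Fin d) ℝ :=
  Matrix.of fun i => ofVec (gf i (toVec (X i)))

/-- `F(x) = (1/m) ∑ i, f_i(x)`. -/
def Fbar {m d : ℕ} (f : Fin m → Vec d → ℝ) (x : Vec d) : ℝ :=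
  (1 / (m : ℝ)) * ∑ i, f i x

/-- `gf` is the gradient field of `f`. -/
def IsGradient {d : ℕ} (f : Vec d → ℝ) (gf : Vec d → Vec d) : Prop :=
  ∀ x, HasGradientAt f (gf x) x

/-- `L`-smoothness: the gradient field is `L`-Lipschitz. -/
def LSmooth {d : ℕ} (L : ℝ) (gf : Vec d → Vec d) : Prop :=
  ∀ x y, ‖gf x - gf y‖ ≤ L * ‖x - y‖

/-- `ξ` is a subgradient of `G` at `x`. -/
def IsSubgradientAt {d : ℕ} (G : Vec d → ℝ) (ξ x : Vec d) : Prop :=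
  ∀ y, G x + (inner ℝ ξ (y - x) : ℝ) ≤ G y

/-- `p` is the proximal point `prox_{γ G}(z)`, i.e. a minimizer of
`y ↦ G(y) + ‖y − z‖²/(2γ)`. -/
def IsProx {d : ℕ} (G : Vec d → ℝ) (γ : ℝ) (z p : Vec d) : Prop :=
  ∀ y, G p + ‖p - z‖ ^ 2 / (2 * γ) ≤ G y + ‖y - z‖ ^ 2 / (2 * γ)

/-- Apply a map `P : ℝ^d → ℝ^d` rowwise to a matrix (used for `prox_{γ g}`). -/
def rowsMap {m d : ℕ} (P : Vec d → Vec d) (Z : Matrix (Fin m) (Fin d) ℝ) :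
    Matrix (Fin m) (Fin d) ℝ :=
  Matrix.of fun i => ofVec (P (toVec (Z i)))

/-- Frobenius inner ℝ product `⟨X, Y⟩ = trace(Xᵀ Y)`. -/
def frInner {n p : Type*} [Fintype n] [Fintype p] (X Y : Matrix n p ℝ) : ℝ :=
  Matrix.trace (Xᵀ * Y)

/-- Squared Frobenius norm. -/
def froSq {n p : Type*} [Fintype n] [Fintype p] (X : Matrix n p ℝ) : ℝ := frInner X X

/-- Frobenius norm. -/
def fro {n p : Type*} [Fintype n] [Fintype p] (X : Matrix n p ℝ) : ℝ := Real.sqrt (froSq X)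

/-- Weighted squared norm `‖X‖²_M = trace(Xᵀ M X)`. -/
def mnormSq {n p : Type*} [Fintype n] [Fintype p] (M : Matrix n n ℝ) (X : Matrix n p ℝ) : ℝ :=
  frInner X (M * X)

/-- Weighted inner ℝ product `⟨X, Y⟩_M = trace(Xᵀ M Y)`. -/
def minnerM {n p : Type*} [Fintype n] [Fintype p] (M : Matrix n n ℝ) (X Y : Matrix n p ℝ) : ℝ :=
  frInner X (M * Y)

/-- The set of eigenvalues of a matrix. -/
def eigs {m : ℕ} (M : Matrix (Fin m) (Fin m) ℝ) : Set ℝ :=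
  {r | ∃ v : Fin m → ℝ, v ≠ 0 ∧ M *ᵥ v = r • v}

/-- Largest eigenvalue. -/
def lmax {m : ℕ} (M : Matrix (Fin m) (Fin m) ℝ) : ℝ := sSup (eigs M)

/-- Smallest eigenvalue. -/
def lmin {m : ℕ} (M : Matrix (Fin m) (Fin m) ℝ) : ℝ := sInf (eigs M)

/-- Second smallest eigenvalue of a symmetric matrix whose null space is `span{1}`:
the smallest eigenvalue attained on the orthogonal complement of `1`. -/
def lam2 {m : ℕ} (M : Matrix (Fin m) (Fin m) ℝ) : ℝ :=
  sInf {r | ∃ v : Fin m → ℝ, v ≠ 0 ∧ (∑ i, v i) = 0 ∧ M *ᵥ v = r • v}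

/-- Spectral radius. -/
def specRad {m : ℕ} (M : Matrix (Fin m) (Fin m) ℝ) : ℝ := sSup ((fun r => |r|) '' eigs M)

/-- The null space of `C` is exactly `span{1}`. -/
def NullSpanOnes {m : ℕ} (C : Matrix (Fin m) (Fin m) ℝ) : Prop :=
  ∀ v : Fin m → ℝ, C *ᵥ v = 0 ↔ ∃ c : ℝ, v = fun _ => c

/-- The averaging matrix `J = 1·1ᵀ/m`. -/
def Jmat (m : ℕ) : Matrix (Fin m) (Fin m) ℝ := Matrix.of fun _ _ => 1 / (m : ℝ)


/-! ### Auxiliary lemmas -/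

lemma toVec_ofVec {d : ℕ} (x : Vec d) : toVec (ofVec x) = x := rfl

lemma ofVec_toVec {d : ℕ} (x : Fin d → ℝ) : ofVec (toVec x) = x := rfl

lemma ofVec_neg {d : ℕ} (x : Vec d) (j : Fin d) : ofVec (-x) j = -(ofVec x j) := rfl

lemma ofVec_smul {d : ℕ} (c : ℝ) (x : Vec d) (j : Fin d) :
    ofVec (c • x) j = c * ofVec x j := rfl

lemma ofVec_eqlin {d : ℕ} (x : Vec d) :
    ofVec x = (WithLp.linearEquiv 2 ℝ (Fin d → ℝ)) x := rfl

lemma ofVec_sum {d n : ℕ} (u : Fin n → Vec d) (j : Fin d) :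
    ofVec (∑ i, u i) j = ∑ i, ofVec (u i) j := by
  rw [ofVec_eqlin, map_sum, Finset.sum_apply]; rfl

lemma inner_eq_sum {d : ℕ} (u z : Vec d) :
    (inner ℝ u z : ℝ) = ∑ j, ofVec u j * ofVec z j := by
  simp only [PiLp.inner_apply, RCLike.inner_apply, conj_trivial]; exact Finset.sum_congr rfl (fun j _ => mul_comm _ _)

lemma slope_ge_lim {φ : ℝ → ℝ} {a c : ℝ} (h : HasDerivAt φ a 0)
    (hs : ∀ t : ℝ, t ∈ Set.Ioc (0:ℝ) 1 → c * t ≤ φ t - φ 0) : c ≤ a := by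
  have h1 := hasDerivAt_iff_tendsto_slope.mp h
  have h2 : Filter.Tendsto (slope φ 0) (nhdsWithin 0 (Set.Ioi 0)) (nhds a) :=
    h1.mono_left (nhdsWithin_mono 0 (fun x hx => ne_of_gt hx))
  refine ge_of_tendsto h2 ?_
  filter_upwards [Ioc_mem_nhdsGT_of_mem
    (by constructor <;> norm_num : (0:ℝ) ∈ Set.Ico (0:ℝ) 1)] with t ht
  have ht0 : 0 < t := ht.1
  have hst := hs t ht
  rw [slope_def_field]
  rw [sub_zero, le_div_iff₀ ht0]
  simpa using hst

lemma slope_le_lim {φ : ℝ → ℝ} {a c : ℝ} (h : HasDerivAt φ a 0)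
    (hs : ∀ t : ℝ, t ∈ Set.Ioc (0:ℝ) 1 → φ t - φ 0 ≤ c * t) : a ≤ c := by
  have h1 := hasDerivAt_iff_tendsto_slope.mp h
  have h2 : Filter.Tendsto (slope φ 0) (nhdsWithin 0 (Set.Ioi 0)) (nhds a) :=
    h1.mono_left (nhdsWithin_mono 0 (fun x hx => ne_of_gt hx))
  refine le_of_tendsto h2 ?_
  filter_upwards [Ioc_mem_nhdsGT_of_mem
    (by constructor <;> norm_num : (0:ℝ) ∈ Set.Ico (0:ℝ) 1)] with t ht
  have ht0 : 0 < t := ht.1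
  have hst := hs t ht
  rw [slope_def_field]
  rw [sub_zero, div_le_iff₀ ht0]
  simpa using hst

lemma dirDeriv {d : ℕ} {f : Vec d → ℝ} {g x : Vec d} (hf : HasGradientAt f g x) (v : Vec d) :
    HasDerivAt (fun t : ℝ => f (x + t • v)) (inner ℝ g v : ℝ) 0 := by
  have hl : HasDerivAt (fun t : ℝ => x + t • v) v 0 := by
    simpa using ((hasDerivAt_id (0:ℝ)).smul_const v).const_add x
  have hfd := hf.hasFDerivAt
  have hfd' : HasFDerivAt f (InnerProductSpace.toDual ℝ (Vec d) g) (x + (0:ℝ) • v) := by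
    simpa using hfd
  have := hfd'.comp_hasDerivAt 0 hl
  simpa [InnerProductSpace.toDual_apply_apply, Function.comp_def] using this

lemma line_comb {d : ℕ} (x y : Vec d) (t : ℝ) :
    x + t • (y - x) = (1 - t) • x + t • y := by module

lemma convex_grad_ineq {d : ℕ} {f : Vec d → ℝ} {g : Vec d} {x : Vec d}
    (hconv : ConvexOn ℝ Set.univ f) (hg : HasGradientAt f g x) (y : Vec d) :
    f x + (inner ℝ g (y - x) : ℝ) ≤ f y := by
  have hd := dirDeriv hg (y - x)
  have key : (inner ℝ g (y - x) : ℝ) ≤ f y - f x := by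
    refine slope_le_lim hd fun t ht => ?_
    have h1 : f (x + t • (y - x)) ≤ (1 - t) * f x + t * f y := by
      rw [line_comb]
      exact hconv.2 (Set.mem_univ x) (Set.mem_univ y) (by linarith [ht.2]) (le_of_lt ht.1)
        (by ring)
    simp only [zero_smul, add_zero]
    nlinarith [ht.1, ht.2]
  linarith

lemma min_subgrad {d : ℕ} {Fn G : Vec d → ℝ} {gF x : Vec d}
    (hG : ConvexOn ℝ Set.univ G) (hF : HasGradientAt Fn gF x)
    (hmin : ∀ y, Fn x + G x ≤ Fn y + G y) :
    IsSubgradientAt G (-gF) x := by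
  intro y
  have hd := dirDeriv hF (y - x)
  have key : G x - G y ≤ (inner ℝ gF (y - x) : ℝ) := by
    refine slope_ge_lim hd fun t ht => ?_
    have h1 : G (x + t • (y - x)) ≤ (1 - t) * G x + t * G y := by
      rw [line_comb]
      exact hG.2 (Set.mem_univ x) (Set.mem_univ y) (by linarith [ht.2]) (le_of_lt ht.1) (by ring)
    have h2 := hmin (x + t • (y - x))
    simp only [zero_smul, add_zero]
    nlinarith [ht.1, ht.2]
  have hneg : (inner ℝ (-gF) (y - x) : ℝ) = -(inner ℝ gF (y - x) : ℝ) := inner_neg_left _ _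
  rw [hneg]; linarith

lemma sqrt_ker {m : ℕ} {C : Matrix (Fin m) (Fin m) ℝ} (hC : C.PosSemidef)
    (v : Fin m → ℝ) : CFC.sqrt C *ᵥ v = 0 ↔ C *ᵥ v = 0 := by
  constructor
  · intro h
    rw [← CFC.sqrt_mul_sqrt_self C hC.nonneg, ← Matrix.mulVec_mulVec, h, Matrix.mulVec_zero]
  · intro h
    have hsym : (CFC.sqrt C)ᵀ = CFC.sqrt C := by
      have := (CFC.sqrt_nonneg C).posSemidef.1
      simpa [Matrix.IsHermitian, Matrix.conjTranspose_eq_transpose_of_trivial] using this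
    have hz : (CFC.sqrt C *ᵥ v) ⬝ᵥ (CFC.sqrt C *ᵥ v) = 0 := by
      have h1 : (CFC.sqrt C *ᵥ v) ⬝ᵥ (CFC.sqrt C *ᵥ v) = v ⬝ᵥ (C *ᵥ v) := by
        rw [dotProduct_mulVec, ← Matrix.mulVec_transpose, hsym,
          Matrix.mulVec_mulVec, CFC.sqrt_mul_sqrt_self C hC.nonneg]
        exact dotProduct_comm _ _
      rw [h1, h, dotProduct_zero]
    exact dotProduct_self_eq_zero.mp hz

lemma sqrt_surj {m : ℕ} {C : Matrix (Fin m) (Fin m) ℝ} (hC : C.PosSemidef)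
    (hCnull : NullSpanOnes C) (w : Fin m → ℝ) (hw : ∑ i, w i = 0) :
    ∃ y : Fin m → ℝ, CFC.sqrt C *ᵥ y = w := by
  classical
  set A := CFC.sqrt C with hA
  set T : EuclideanSpace ℝ (Fin m) →ₗ[ℝ] EuclideanSpace ℝ (Fin m) := Matrix.toEuclideanLin A
  have hadj : LinearMap.adjoint T = T := by
    rw [show T = Matrix.toEuclideanLin A from rfl,
      ← Matrix.toEuclideanLin_conjTranspose_eq_adjoint, (CFC.sqrt_nonneg C).posSemidef.1]
  have hle : LinearMap.range T ≤ (LinearMap.ker T)ᗮ := by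
    rintro _ ⟨y, rfl⟩
    rw [Submodule.mem_orthogonal]
    intro v hv
    have : (inner ℝ v (T y) : ℝ) = inner ℝ (T v) y := by
      conv_lhs => rw [← hadj]
      exact LinearMap.adjoint_inner_right T v y
    rw [this, LinearMap.mem_ker.mp hv, inner_zero_left]
  have hrange : LinearMap.range T = (LinearMap.ker T)ᗮ := by
    apply Submodule.eq_of_le_of_finrank_eq hle
    have h1 := LinearMap.finrank_range_add_finrank_ker T
    have h2 := Submodule.finrank_add_finrank_orthogonal (LinearMap.ker T)
    simp only [finrank_euclideanSpace, Fintype.card_fin] at h1 h2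
    omega
  have hmem : ((WithLp.equiv 2 (Fin m → ℝ)).symm w) ∈ (LinearMap.ker T)ᗮ := by
    rw [Submodule.mem_orthogonal]
    intro v hv
    have hker : A *ᵥ (WithLp.equiv 2 (Fin m → ℝ) v) = 0 := by
      have h4 := LinearMap.mem_ker.mp hv
      have h3 : WithLp.equiv 2 (Fin m → ℝ) (T v) = 0 := by rw [h4]; rfl
      exact h3
    obtain ⟨c, hc⟩ := (hCnull _).mp ((sqrt_ker hC _).mp hker)
    have h5 : (inner ℝ v ((WithLp.equiv 2 (Fin m → ℝ)).symm w) : ℝ) = ∑ i, v i * w i := by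
      simp only [PiLp.inner_apply, RCLike.inner_apply, conj_trivial]
      exact Finset.sum_congr rfl (fun i _ => mul_comm _ _)
    rw [h5]
    have hv' : ∀ i, v i = c := fun i => congrFun hc i
    simp only [hv']
    rw [← Finset.mul_sum, hw, mul_zero]
  rw [← hrange] at hmem
  obtain ⟨y, hy⟩ := hmem
  refine ⟨WithLp.equiv 2 (Fin m → ℝ) y, ?_⟩
  have := congrArg (WithLp.equiv 2 (Fin m → ℝ)) hy
  exact this

lemma fbar_grad {m d : ℕ} (f : Fin m → Vec d → ℝ) (gf : Fin m → Vec d → Vec d)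
    (hgrad : ∀ i, IsGradient (f i) (gf i)) (x : Vec d) :
    HasGradientAt (Fbar f) ((1/(m:ℝ)) • ∑ i, gf i x) x := by
  rw [hasGradientAt_iff_hasFDerivAt]
  have h1 : HasFDerivAt (fun y => ∑ i, f i y)
      (∑ i, (InnerProductSpace.toDual ℝ (Vec d)) (gf i x)) x :=
    HasFDerivAt.fun_sum fun i _ => (hgrad i x).hasFDerivAt
  have h2 := h1.const_mul ((1:ℝ)/m)
  have h3 : (InnerProductSpace.toDual ℝ (Vec d)) ((1/(m:ℝ)) • ∑ i, gf i x)
      = (1/(m:ℝ)) • ∑ i, (InnerProductSpace.toDual ℝ (Vec d)) (gf i x) := by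
    rw [_root_.map_smul, map_sum]
  rw [h3]
  exact h2

/-- Lemma 1: under Assumptions 1 and 2, `x*` is a global minimizer of
`F + G` iff `1·(x*)ᵀ ∈ S_KKT`. -/
theorem statement_0
    (m d : ℕ) (hm : 0 < m) (hd : 0 < d) (L : ℝ)
    (f : Fin m → Vec d → ℝ) (gf : Fin m → Vec d → Vec d)
    (hgrad : ∀ i, IsGradient (f i) (gf i))
    (hconv : ∀ i, ConvexOn ℝ Set.univ (f i))
    (hsmooth : ∀ i, LSmooth L (gf i))
    (G : Vec d → ℝ) (hG : ConvexOn ℝ Set.univ G)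
    (C : Matrix (Fin m) (Fin m) ℝ) (hC : C.PosSemidef) (hCnull : NullSpanOnes C)
    (xstar : Vec d) :
    (∀ x : Vec d, Fbar f xstar + G xstar ≤ Fbar f x + G x) ↔
      oneOuter m xstar ∈
        {X : Matrix (Fin m) (Fin d) ℝ | ∃ Y : Matrix (Fin m) (Fin d) ℝ,
          CFC.sqrt C * X = 0 ∧
          ∀ i, IsSubgradientAt G (toVec ((-(gradMat gf X + CFC.sqrt C * Y)) i)) (toVec (X i))} := by
  classical
  have hm0 : (m:ℝ) ≠ 0 := Nat.cast_ne_zero.mpr hm.ne'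
  have hmpos : (0:ℝ) < m := Nat.cast_pos.mpr hm
  set A := CFC.sqrt C with hAdef
  have hAsym : ∀ i k : Fin m, A i k = A k i := by
    intro i k
    have h := congrFun (congrFun (CFC.sqrt_nonneg C).posSemidef.1 i) k
    rw [Matrix.conjTranspose_apply, star_trivial] at h
    exact h.symm
  have hAones : A *ᵥ (fun _ => (1:ℝ)) = 0 :=
    (sqrt_ker hC _).mpr ((hCnull _).mpr ⟨1, rfl⟩)
  have hrowX : ∀ i : Fin m, toVec ((oneOuter m xstar) i) = xstar := by
    intro i
    show toVec (ofVec xstar) = xstar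
    exact toVec_ofVec xstar
  have hGradRow : ∀ (i : Fin m) (j : Fin d),
      gradMat gf (oneOuter m xstar) i j = ofVec (gf i xstar) j := by
    intro i j
    simp only [gradMat, Matrix.of_apply, hrowX]
  simp only [Set.mem_setOf_eq]
  constructor
  · intro hmin
    have hF := fbar_grad f gf hgrad xstar
    have hxi : IsSubgradientAt G (-((1/(m:ℝ)) • ∑ i, gf i xstar)) xstar :=
      min_subgrad hG hF hmin
    set ξ : Vec d := -((1/(m:ℝ)) • ∑ i, gf i xstar) with hxidef
    set W : Matrix (Fin m) (Fin d) ℝ :=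
      Matrix.of (fun i j => -(ofVec (gf i xstar) j) - ofVec ξ j) with hW
    have hxij : ∀ j, ofVec ξ j = -((1/(m:ℝ)) * ∑ i, ofVec (gf i xstar) j) := by
      intro j
      rw [hxidef, ofVec_neg, ofVec_smul, ofVec_sum]
    have hcol : ∀ j, ∑ i, W i j = 0 := by
      intro j
      simp only [hW, Matrix.of_apply]
      rw [Finset.sum_sub_distrib, Finset.sum_neg_distrib, Finset.sum_const, Finset.card_univ,
        Fintype.card_fin, hxij j, nsmul_eq_mul]
      field_simp
      ring
    have hsol : ∀ j : Fin d, ∃ y : Fin m → ℝ, A *ᵥ y = fun i => W i j :=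
      fun j => sqrt_surj hC hCnull _ (hcol j)
    choose yc hyc using hsol
    refine ⟨Matrix.of (fun i j => yc j i), ?_, ?_⟩
    · ext i j
      rw [Matrix.mul_apply]
      simp only [oneOuter, Matrix.of_apply]
      rw [← Finset.sum_mul]
      have hsum : ∑ k, A i k = 0 := by
        have h6 := congrFun hAones i
        simpa [Matrix.mulVec, dotProduct] using h6
      rw [hsum, zero_mul]
      simp
    · intro i
      have hAY : ∀ j, (A * Matrix.of (fun i j => yc j i)) i j = W i j := by
        intro j
        rw [Matrix.mul_apply]
        have h7 := congrFun (hyc j) i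
        simpa [Matrix.mulVec, dotProduct, Matrix.of_apply] using h7
      have hfun : ((-(gradMat gf (oneOuter m xstar) + A * Matrix.of (fun i j => yc j i))) i)
          = ofVec ξ := by
        funext j
        simp only [Matrix.neg_apply, Matrix.add_apply]
        rw [hAY j, hGradRow i j]
        simp only [hW, Matrix.of_apply]
        ring
      rw [hrowX i, hfun, toVec_ofVec]
      exact hxi
  · rintro ⟨Y, hAX, hsub⟩
    intro x
    have hsub' : ∀ i, IsSubgradientAt G
        (toVec ((-(gradMat gf (oneOuter m xstar) + A * Y)) i)) xstar := by
      intro i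
      have h8 := hsub i
      rwa [hrowX i] at h8
    set v : Vec d := x - xstar with hv
    have hAcol : ∀ k : Fin m, ∑ i, A i k = 0 := by
      intro k
      have h9 := congrFun hAones k
      simp only [Matrix.mulVec, dotProduct, mul_one, Pi.zero_apply] at h9
      calc ∑ i, A i k = ∑ i, A k i := Finset.sum_congr rfl (fun i _ => hAsym i k)
        _ = 0 := h9
    have hAYsum : ∀ j, ∑ i, (A * Y) i j = 0 := by
      intro j
      simp only [Matrix.mul_apply]
      rw [Finset.sum_comm]
      calc ∑ k, ∑ i, A i k * Y k j = ∑ k, (∑ i, A i k) * Y k j :=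
            Finset.sum_congr rfl (fun k _ => (Finset.sum_mul _ _ _).symm)
        _ = 0 := by simp [hAcol]
    have hGineq : ∀ i, G xstar +
        (inner ℝ (toVec ((-(gradMat gf (oneOuter m xstar) + A * Y)) i)) v : ℝ) ≤ G x :=
      fun i => hsub' i x
    have hfineq : ∀ i, f i xstar + (inner ℝ (gf i xstar) v : ℝ) ≤ f i x :=
      fun i => convex_grad_ineq (hconv i) (hgrad i xstar) x
    have hterm : ∀ i, (inner ℝ (toVec ((-(gradMat gf (oneOuter m xstar) + A * Y)) i)) v : ℝ)
        = ∑ j, (-(gradMat gf (oneOuter m xstar) i j + (A * Y) i j)) * ofVec v j := by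
      intro i
      rw [inner_eq_sum, ofVec_toVec]
      exact Finset.sum_congr rfl (fun j _ => by simp [Matrix.neg_apply, Matrix.add_apply])
    have hterm2 : ∀ i, (inner ℝ (gf i xstar) v : ℝ)
        = ∑ j, ofVec (gf i xstar) j * ofVec v j := fun i => inner_eq_sum _ _
    have hcancel : ∑ i, (inner ℝ (toVec ((-(gradMat gf (oneOuter m xstar) + A * Y)) i)) v : ℝ)
        = - ∑ i, (inner ℝ (gf i xstar) v : ℝ) := by
      calc ∑ i, (inner ℝ (toVec ((-(gradMat gf (oneOuter m xstar) + A * Y)) i)) v : ℝ)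
          = ∑ i, ∑ j, (-(gradMat gf (oneOuter m xstar) i j + (A * Y) i j)) * ofVec v j :=
            Finset.sum_congr rfl (fun i _ => hterm i)
        _ = ∑ j, ∑ i, (-(gradMat gf (oneOuter m xstar) i j + (A * Y) i j)) * ofVec v j :=
            Finset.sum_comm
        _ = ∑ j, (- ∑ i, ofVec (gf i xstar) j) * ofVec v j := by
            refine Finset.sum_congr rfl (fun j _ => ?_)
            rw [← Finset.sum_mul]
            congr 1
            rw [Finset.sum_neg_distrib, Finset.sum_add_distrib, hAYsum j, add_zero]
            congr 1
            all_goals exact Finset.sum_congr rfl (fun i _ => hGradRow i j)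
        _ = ∑ j, -(∑ i, ofVec (gf i xstar) j * ofVec v j) := by
            refine Finset.sum_congr rfl (fun j _ => ?_)
            rw [neg_mul, Finset.sum_mul]
        _ = - ∑ j, ∑ i, ofVec (gf i xstar) j * ofVec v j := Finset.sum_neg_distrib _
        _ = - ∑ i, ∑ j, ofVec (gf i xstar) j * ofVec v j := by rw [Finset.sum_comm]
        _ = - ∑ i, (inner ℝ (gf i xstar) v : ℝ) := by
            congr 1
            all_goals exact Finset.sum_congr rfl (fun i _ => (hterm2 i).symm)
    have hsumf : ∑ i, f i xstar + ∑ i, (inner ℝ (gf i xstar) v : ℝ) ≤ ∑ i, f i x := by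
      have h10 := Finset.sum_le_sum (fun i (_ : i ∈ Finset.univ) => hfineq i)
      rwa [Finset.sum_add_distrib] at h10
    have hsumG : (m:ℝ) * G xstar +
        ∑ i, (inner ℝ (toVec ((-(gradMat gf (oneOuter m xstar) + A * Y)) i)) v : ℝ)
        ≤ (m:ℝ) * G x := by
      have h11 := Finset.sum_le_sum (fun i (_ : i ∈ Finset.univ) => hGineq i)
      rw [Finset.sum_add_distrib] at h11
      simp only [Finset.sum_const, Finset.card_univ, Fintype.card_fin, nsmul_eq_mul] at h11
      exact h11
    have hfinal : ∑ i, f i xstar + (m:ℝ) * G xstar ≤ ∑ i, f i x + (m:ℝ) * G x := by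
      rw [hcancel] at hsumG
      linarith
    show Fbar f xstar + G xstar ≤ Fbar f x + G x
    simp only [Fbar]
    calc 1/(m:ℝ) * ∑ i, f i xstar + G xstar
        = 1/(m:ℝ) * (∑ i, f i xstar + (m:ℝ) * G xstar) := by
          rw [mul_add, ← mul_assoc, one_div_mul_cancel hm0, one_mul]
      _ ≤ 1/(m:ℝ) * (∑ i, f i x + (m:ℝ) * G x) :=
          mul_le_mul_of_nonneg_left hfinal (by positivity)
      _ = 1/(m:ℝ) * ∑ i, f i x + G x := by
          rw [mul_add, ← mul_assoc, one_div_mul_cancel hm0, one_mul]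
end
end

section
/- Fix m, d, γ > 0, matrices A, B ∈ ℝ^{m×m}, and a symmetric positive semidefinite C ∈ ℝ^{m×m} with null space exactly span{1}. Then the following are equivalent: (i) for every choice of functions f_1,…,f_m : ℝ^d → ℝ that are differentiable, convex and have Lipschitz gradients and every convex G : ℝ^d → ℝ, one has S_KKT = S_Fix; (ii) 1ᵀA1 = m and 1ᵀB = 1ᵀ. -/
noncomputable section

open Matrix Finset

open scoped MatrixOrder

/-- The KKT set `S_KKT` of the consensus reformulation. -/
def SKKT {m d : ℕ} (sC : Matrix (Fin m) (Fin m) ℝ) (gf : Fin m → Vec d → Vec d)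
    (G : Vec d → ℝ) : Set (Matrix (Fin m) (Fin d) ℝ) :=
  {X | ∃ Y : Matrix (Fin m) (Fin d) ℝ,
    sC * X = 0 ∧
    ∀ i, IsSubgradientAt G (toVec ((-(gradMat gf X + sC * Y)) i)) (toVec (X i))}

/-- The fixed-point set `S_Fix` of the ABC algorithm. -/
def SFix {m d : ℕ} (A B C : Matrix (Fin m) (Fin m) ℝ) (γ : ℝ)
    (gf : Fin m → Vec d → Vec d) (G : Vec d → ℝ) : Set (Matrix (Fin m) (Fin d) ℝ) :=
  {X | C * X = 0 ∧ ∃ Ξ : Matrix (Fin m) (Fin d) ℝ,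
    (∀ i, IsSubgradientAt G (toVec (Ξ i)) (toVec (X i))) ∧
    (fun _ => (1 : ℝ)) ᵥ* ((1 - A) * X) + γ • ((fun _ => (1 : ℝ)) ᵥ* (B * gradMat gf X))
      = (-γ) • ((fun _ => (1 : ℝ)) ᵥ* Ξ)}


section AuxLemmas

open Matrix Finset

variable {m d : ℕ} {C : Matrix (Fin m) (Fin m) ℝ}

lemma aux_sqrt_transpose (hC : C.PosSemidef) : (CFC.sqrt C)ᵀ = (CFC.sqrt C) := by
  have h := (CFC.sqrt_nonneg C).posSemidef.1
  simpa [Matrix.IsHermitian] using h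

lemma aux_sqrt_mulVec_zero_iff (hC : C.PosSemidef) (v : Fin m → ℝ) :
    (CFC.sqrt C) *ᵥ v = 0 ↔ C *ᵥ v = 0 := by
  constructor
  · intro h
    rw [← CFC.sqrt_mul_sqrt_self C hC.nonneg, ← Matrix.mulVec_mulVec, h, Matrix.mulVec_zero]
  · intro h
    have hdot : ((CFC.sqrt C) *ᵥ v) ⬝ᵥ ((CFC.sqrt C) *ᵥ v) = 0 := by
      rw [dotProduct_mulVec, ← Matrix.vecMul_transpose, aux_sqrt_transpose hC,
        Matrix.vecMul_vecMul, CFC.sqrt_mul_sqrt_self C hC.nonneg]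
      have hsym : Cᵀ = C := by simpa [Matrix.IsHermitian] using hC.1
      rw [← hsym, Matrix.vecMul_transpose, h, zero_dotProduct]
    funext i
    have hnn : ∀ i ∈ Finset.univ, 0 ≤ ((CFC.sqrt C) *ᵥ v) i * ((CFC.sqrt C) *ᵥ v) i :=
      fun i _ => mul_self_nonneg _
    have := (Finset.sum_eq_zero_iff_of_nonneg hnn).1 hdot i (Finset.mem_univ i)
    simpa [mul_self_eq_zero] using this

lemma aux_sqrt_surj (hC : C.PosSemidef) (hCnull : NullSpanOnes C) (u : Fin m → ℝ)
    (hu : ∑ i, u i = 0) : ∃ y : Fin m → ℝ, (CFC.sqrt C) *ᵥ y = u := by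
  set T := Matrix.toEuclideanLin (CFC.sqrt C) with hT
  have hsymm : T.IsSymmetric := by
    rw [hT, ← Matrix.isHermitian_iff_isSymmetric]
    exact (CFC.sqrt_nonneg C).posSemidef.1
  have hrange : (LinearMap.range T)ᗮ = LinearMap.ker T := by
    ext v
    simp only [Submodule.mem_orthogonal, LinearMap.mem_range, LinearMap.mem_ker,
      forall_exists_index, forall_apply_eq_imp_iff]
    constructor
    · intro h
      have h2 : (inner ℝ (T v) (T v) : ℝ) = 0 := by
        rw [← hsymm (T v) v]; exact h (T v)
      exact inner_self_eq_zero.1 h2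
    · intro h w
      rw [hsymm w v, h, inner_zero_right]
  have hker : ∀ v : EuclideanSpace ℝ (Fin m), T v = 0 ↔ ∃ c : ℝ, (⇑v : Fin m → ℝ) = fun _ => c := by
    intro v
    rw [hT, Matrix.toEuclideanLin_apply]
    constructor
    · intro h
      have h2 : (CFC.sqrt C) *ᵥ (WithLp.equiv 2 (Fin m → ℝ) v) = 0 := by
        have := congrArg (WithLp.equiv 2 (Fin m → ℝ)) h
        simpa using this
      exact (hCnull _).1 ((aux_sqrt_mulVec_zero_iff hC _).1 h2)
    · intro h
      have h2 : (CFC.sqrt C) *ᵥ (WithLp.equiv 2 (Fin m → ℝ) v) = 0 :=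
        (aux_sqrt_mulVec_zero_iff hC _).2 ((hCnull _).2 h)
      exact congrArg (WithLp.toLp 2) h2
  have humem : ((WithLp.equiv 2 (Fin m → ℝ)).symm u) ∈ LinearMap.range T := by
    rw [← Submodule.orthogonal_orthogonal (LinearMap.range T), hrange]
    intro v hv
    obtain ⟨c, hc⟩ := (hker v).1 hv
    have h5 : (inner ℝ v ((WithLp.equiv 2 (Fin m → ℝ)).symm u) : ℝ) = ∑ i, v i * u i := by
      simp [PiLp.inner_apply, RCLike.inner_apply]
      exact Finset.sum_congr rfl fun i _ => mul_comm _ _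
    rw [h5]
    have hvc : ∀ i, v i = c := fun i => congrFun hc i
    calc ∑ i, v i * u i = c * ∑ i, u i := by
          rw [Finset.mul_sum]; exact Finset.sum_congr rfl (fun i _ => by rw [hvc i])
    _ = 0 := by rw [hu, mul_zero]
  obtain ⟨y, hy⟩ := humem
  refine ⟨(WithLp.equiv 2 (Fin m → ℝ)) y, ?_⟩
  rw [hT, Matrix.toEuclideanLin_apply] at hy
  have := congrArg (WithLp.equiv 2 (Fin m → ℝ)) hy
  simpa using this

lemma aux_mul_eq_zero_iff (M : Matrix (Fin m) (Fin m) ℝ) (X : Matrix (Fin m) (Fin d) ℝ) :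
    M * X = 0 ↔ ∀ j, M *ᵥ (fun i => X i j) = 0 := by
  constructor
  · intro h j
    funext i
    have := congrFun (congrFun h i) j
    simpa [Matrix.mul_apply, Matrix.mulVec, dotProduct] using this
  · intro h
    ext i j
    have := congrFun (h j) i
    simpa [Matrix.mul_apply, Matrix.mulVec, dotProduct] using this

lemma aux_sqrt_solve (hC : C.PosSemidef) (hCnull : NullSpanOnes C)
    (M : Matrix (Fin m) (Fin d) ℝ) (hM : ∀ j, ∑ i, M i j = 0) :
    ∃ Y : Matrix (Fin m) (Fin d) ℝ, (CFC.sqrt C) * Y = M := by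
  have h : ∀ j, ∃ y : Fin m → ℝ, (CFC.sqrt C) *ᵥ y = fun i => M i j :=
    fun j => aux_sqrt_surj hC hCnull _ (hM j)
  choose y hy using h
  refine ⟨Matrix.of fun i j => y j i, ?_⟩
  ext i j
  have := congrFun (hy j) i
  simpa [Matrix.mul_apply, Matrix.mulVec, dotProduct] using this

lemma aux_sqrtX_zero_iff (hC : C.PosSemidef) (X : Matrix (Fin m) (Fin d) ℝ) :
    (CFC.sqrt C) * X = 0 ↔ C * X = 0 := by
  rw [aux_mul_eq_zero_iff, aux_mul_eq_zero_iff]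
  exact forall_congr' fun j => aux_sqrt_mulVec_zero_iff hC _

lemma aux_rows_eq (hCnull : NullSpanOnes C) {X : Matrix (Fin m) (Fin d) ℝ}
    (h : C * X = 0) (i i' : Fin m) (j : Fin d) : X i j = X i' j := by
  obtain ⟨c, hc⟩ := (hCnull _).1 ((aux_mul_eq_zero_iff C X).1 h j)
  rw [congrFun hc i, congrFun hc i']

lemma aux_vecMul_eq_zero (hm : 0 < m) {u : Fin m → ℝ} (hu : ∑ i, u i = 0)
    {X : Matrix (Fin m) (Fin d) ℝ} (hX : ∀ i i' j, X i j = X i' j) : u ᵥ* X = 0 := by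
  funext j
  have h1 : (u ᵥ* X) j = ∑ i, u i * X i j := by
    simp [Matrix.vecMul, dotProduct]
  rw [h1]
  calc ∑ i, u i * X i j = ∑ i, u i * X ⟨0, hm⟩ j :=
        Finset.sum_congr rfl (fun i _ => by rw [hX i ⟨0, hm⟩ j])
  _ = (∑ i, u i) * X ⟨0, hm⟩ j := by rw [Finset.sum_mul]
  _ = 0 := by rw [hu, zero_mul]

lemma aux_ones_vecMul_sqrt (hC : C.PosSemidef) (hCnull : NullSpanOnes C) :
    (fun _ => (1 : ℝ)) ᵥ* (CFC.sqrt C) = 0 := by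
  have h1 : (CFC.sqrt C) *ᵥ (fun _ => (1 : ℝ)) = 0 :=
    (aux_sqrt_mulVec_zero_iff hC _).2 ((hCnull _).2 ⟨1, rfl⟩)
  rw [← aux_sqrt_transpose hC, Matrix.vecMul_transpose, h1]

lemma aux_inner_hasGradient (c x : Vec d) :
    HasGradientAt (fun y => (inner ℝ c y : ℝ)) c x := by
  rw [hasGradientAt_iff_hasFDerivAt]
  exact (InnerProductSpace.toDual ℝ (Vec d) c).hasFDerivAt

lemma aux_inner_convex (c : Vec d) : ConvexOn ℝ Set.univ fun y => (inner ℝ c y : ℝ) := by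
  refine ⟨convex_univ, fun x _ y _ a b _ _ _ => ?_⟩
  refine le_of_eq ?_
  show (inner ℝ c (a • x + b • y) : ℝ) = a • (inner ℝ c x : ℝ) + b • (inner ℝ c y : ℝ)
  rw [inner_add_right, real_inner_smul_right, real_inner_smul_right]
  simp [smul_eq_mul]

lemma aux_subgrad_inner_iff (b ξ x : Vec d) :
    IsSubgradientAt (fun y => (inner ℝ b y : ℝ)) ξ x ↔ ξ = b := by
  constructor
  · intro h
    have h1 := h (x + (ξ - b))
    simp only at h1
    rw [add_sub_cancel_left, inner_add_right] at h1
    have h2 : (inner ℝ ξ (ξ - b) : ℝ) ≤ inner ℝ b (ξ - b) := by linarith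
    have h3 : (inner ℝ (ξ - b) (ξ - b) : ℝ) ≤ 0 := by
      rw [inner_sub_left]; linarith
    exact sub_eq_zero.1 (real_inner_self_nonpos.1 h3)
  · rintro rfl y
    have h : x + (y - x) = y := by abel
    show (inner ℝ ξ x : ℝ) + inner ℝ ξ (y - x) ≤ (inner ℝ ξ y : ℝ)
    exact le_of_eq (by rw [← inner_add_right, h])

end AuxLemmas

/-- Lemma 2: `S_KKT = S_Fix` for every admissible `f` and `G` iff
`1ᵀA1 = m` and `1ᵀB = 1ᵀ`. -/
theorem statement_1
    (m d : ℕ) (hm : 0 < m) (hd : 0 < d) (γ : ℝ) (hγ : 0 < γ)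
    (A B C : Matrix (Fin m) (Fin m) ℝ) (hC : C.PosSemidef) (hCnull : NullSpanOnes C) :
    (∀ (f : Fin m → Vec d → ℝ) (gf : Fin m → Vec d → Vec d),
        (∀ i, IsGradient (f i) (gf i)) →
        (∀ i, ConvexOn ℝ Set.univ (f i)) →
        (∀ i, ∃ L : ℝ, 0 ≤ L ∧ LSmooth L (gf i)) →
        ∀ G : Vec d → ℝ, ConvexOn ℝ Set.univ G →
          SKKT (CFC.sqrt C) gf G = SFix A B C γ gf G) ↔
      ((∑ i, ∑ j, A i j) = (m : ℝ) ∧ ∀ j, ∑ i, B i j = 1) := by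
  have hγ' : γ ≠ 0 := ne_of_gt hγ
  constructor
  · intro H
    have hkey : ∀ (c : Fin m → Vec d) (b : Vec d),
        SKKT (CFC.sqrt C) (fun i _ => c i) (fun x => (inner ℝ b x : ℝ))
          = SFix A B C γ (fun i _ => c i) (fun x => (inner ℝ b x : ℝ)) := by
      intro c b
      exact H _ _ (fun i x => aux_inner_hasGradient (c i) x)
        (fun i => aux_inner_convex (c i))
        (fun i => ⟨0, le_refl 0, fun x y => by simp⟩) _ (aux_inner_convex b)
    -- master computation with X = 0
    have hmain : ∀ (c : Fin m → Vec d) (b : Vec d),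
        (∃ Y : Matrix (Fin m) (Fin d) ℝ, (CFC.sqrt C) * Y
            = -(Matrix.of (fun i => ofVec (c i)) + Matrix.of fun _ : Fin m => ofVec b)) →
        ∀ jd : Fin d, ∑ i, ∑ k, B i k * ofVec (c k) jd = -((m : ℝ) * ofVec b jd) := by
      rintro c b ⟨Y, hY⟩ jd
      have hmat : -(gradMat (fun i _ => c i) (0 : Matrix (Fin m) (Fin d) ℝ) + (CFC.sqrt C) * Y)
          = Matrix.of fun _ : Fin m => ofVec b := by
        rw [hY]
        show -(Matrix.of (fun i => ofVec (c i))
            + -(Matrix.of (fun i => ofVec (c i)) + Matrix.of fun _ : Fin m => ofVec b))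
          = Matrix.of fun _ : Fin m => ofVec b
        abel
      have hmem : (0 : Matrix (Fin m) (Fin d) ℝ)
          ∈ SKKT (CFC.sqrt C) (fun i _ => c i) (fun x => (inner ℝ b x : ℝ)) := by
        refine ⟨Y, by rw [Matrix.mul_zero], fun i => ?_⟩
        rw [hmat, aux_subgrad_inner_iff]
        rfl
      rw [hkey c b] at hmem
      obtain ⟨-, Ξ, hsub, heq⟩ := hmem
      have hΞ : Ξ = Matrix.of fun _ : Fin m => ofVec b := by
        ext i j
        have h := (aux_subgrad_inner_iff b _ _).1 (hsub i)
        exact congrFun (congrArg ofVec h) j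
      rw [hΞ, Matrix.mul_zero, Matrix.vecMul_zero, zero_add] at heq
      have h := congrFun heq jd
      simp only [Pi.smul_apply, smul_eq_mul] at h
      have hL : ((fun _ => (1 : ℝ)) ᵥ* (B * gradMat (fun i _ => c i) (0 : Matrix (Fin m) (Fin d) ℝ))) jd
          = ∑ i, ∑ k, B i k * ofVec (c k) jd := by
        simp [Matrix.vecMul, dotProduct, Matrix.mul_apply, gradMat]
      have hR : ((fun _ => (1 : ℝ)) ᵥ* (Matrix.of fun _ : Fin m => ofVec b)) jd
          = (m : ℝ) * ofVec b jd := by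
        simp [Matrix.vecMul, dotProduct]
      rw [hL, hR] at h
      apply mul_left_cancel₀ hγ'
      rw [h]; ring
    constructor
    · -- 1ᵀ A 1 = m
      have hg0 : gradMat (fun (_ : Fin m) (_ : Vec d) => (0 : Vec d))
          (Matrix.of fun (_ : Fin m) (_ : Fin d) => (1 : ℝ)) = 0 := by
        ext i j
        simp [gradMat, ofVec]
      have hmem : (Matrix.of fun (_ : Fin m) (_ : Fin d) => (1 : ℝ))
          ∈ SKKT (CFC.sqrt C) (fun _ _ => (0 : Vec d)) (fun x => (inner ℝ (0 : Vec d) x : ℝ)) := by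
        refine ⟨0, ?_, fun i => ?_⟩
        · rw [aux_sqrtX_zero_iff hC, aux_mul_eq_zero_iff]
          intro j
          exact (hCnull _).2 ⟨1, rfl⟩
        · rw [hg0, Matrix.mul_zero, add_zero, neg_zero, aux_subgrad_inner_iff]
          rfl
      rw [hkey (fun _ => 0) 0] at hmem
      obtain ⟨-, Ξ, hsub, heq⟩ := hmem
      have hΞ : Ξ = 0 := by
        ext i j
        have h := (aux_subgrad_inner_iff 0 _ _).1 (hsub i)
        exact congrFun (congrArg ofVec h) j
      rw [hΞ, hg0, Matrix.mul_zero, Matrix.vecMul_zero, smul_zero, add_zero] at heq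
      have hj := congrFun heq ⟨0, hd⟩
      have hcomp : ((fun _ => (1 : ℝ)) ᵥ* ((1 - A) * Matrix.of fun (_ : Fin m) (_ : Fin d) => (1 : ℝ))) ⟨0, hd⟩
          = (m : ℝ) - ∑ i, ∑ k, A i k := by
        simp [Matrix.vecMul, dotProduct, Matrix.mul_apply, Matrix.sub_apply,
          Matrix.one_apply, Finset.sum_sub_distrib]
      rw [hcomp] at hj
      have h0 : (m : ℝ) - ∑ i, ∑ k, A i k = 0 := by simpa using hj
      linarith
    · -- column sums of B
      intro jc
      have hejd : ofVec (toVec (Pi.single (⟨0, hd⟩ : Fin d) (1 : ℝ))) ⟨0, hd⟩ = 1 := by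
        simp [ofVec, toVec]
      set e : Vec d := toVec (Pi.single (⟨0, hd⟩ : Fin d) (1 : ℝ)) with he
      -- step c : total sum of B is m
      have hc1 := hmain (fun _ => e) (-e) ⟨0, by
        rw [Matrix.mul_zero]
        ext i j
        simp [ofVec]⟩ ⟨0, hd⟩
      have hneg : ofVec (-e) ⟨0, hd⟩ = -1 := by
        have : ofVec (-e) ⟨0, hd⟩ = -(ofVec e ⟨0, hd⟩) := rfl
        rw [this, hejd]
      rw [hneg] at hc1
      simp only [hejd, mul_one, mul_neg, neg_neg] at hc1
      -- hc1 : ∑ i, ∑ k, B i k = m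
      have hsumB : ∑ k : Fin m, (∑ i, B i k) = (m : ℝ) := by
        rw [Finset.sum_comm]; simpa using hc1
      -- step b : column sums are orthogonal to mean-zero vectors
      have hb : ∀ v : Fin m → ℝ, (∑ i, v i) = 0 → ∑ k, (∑ i, B i k) * v k = 0 := by
        intro v hv
        have hsolve : ∃ Y : Matrix (Fin m) (Fin d) ℝ, (CFC.sqrt C) * Y
            = -(Matrix.of (fun i => ofVec (v i • e)) + Matrix.of fun _ : Fin m => ofVec (0 : Vec d)) := by
          apply aux_sqrt_solve hC hCnull
          intro j
          have hent : ∀ i : Fin m, (-(Matrix.of (fun i => ofVec (v i • e))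
              + Matrix.of fun _ : Fin m => ofVec (0 : Vec d))) i j = -(v i * ofVec e j) := by
            intro i
            show -(ofVec (v i • e) j + ofVec (0 : Vec d) j) = -(v i * ofVec e j)
            have h1 : ofVec (v i • e) j = v i * ofVec e j := rfl
            have h2 : ofVec (0 : Vec d) j = 0 := rfl
            rw [h1, h2, add_zero]
          rw [Finset.sum_congr rfl fun i _ => hent i]
          have : ∑ i, -(v i * ofVec e j) = -((∑ i, v i) * ofVec e j) := by
            rw [Finset.sum_neg_distrib, Finset.sum_mul]
          rw [this, hv, zero_mul, neg_zero]
        have h := hmain (fun k => v k • e) 0 hsolve ⟨0, hd⟩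
        have hz : ofVec (0 : Vec d) (⟨0, hd⟩ : Fin d) = 0 := rfl
        rw [hz, mul_zero, neg_zero] at h
        have hsm : ∀ k, ofVec (v k • e) (⟨0, hd⟩ : Fin d) = v k := by
          intro k
          have h1 : ofVec (v k • e) (⟨0, hd⟩ : Fin d) = v k * ofVec e ⟨0, hd⟩ := rfl
          rw [h1, hejd, mul_one]
        simp only [hsm] at h
        -- h : ∑ i, ∑ k, B i k * v k = 0
        calc ∑ k, (∑ i, B i k) * v k = ∑ k, ∑ i, B i k * v k := by
              exact Finset.sum_congr rfl fun k _ => by rw [Finset.sum_mul]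
        _ = ∑ i, ∑ k, B i k * v k := Finset.sum_comm
        _ = 0 := h
      -- all column sums are equal
      have hallk : ∀ k, (∑ i, B i k) = ∑ i, B i ⟨0, hm⟩ := by
        intro k
        have hv : ∑ i : Fin m, ((if i = k then (1 : ℝ) else 0)
            - (if i = (⟨0, hm⟩ : Fin m) then 1 else 0)) = 0 := by
          rw [Finset.sum_sub_distrib]; simp
        have hb2 := hb _ hv
        have hexp : ∑ j : Fin m, (∑ i, B i j) * ((if j = k then (1 : ℝ) else 0)
            - (if j = (⟨0, hm⟩ : Fin m) then 1 else 0))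
            = (∑ i, B i k) - ∑ i, B i ⟨0, hm⟩ := by
          simp [mul_sub, Finset.sum_sub_distrib, mul_ite, mul_one, mul_zero,
            Finset.sum_ite_eq']
        rw [hexp] at hb2
        linarith
      have hsum2 : ∑ k : Fin m, (∑ i, B i k) = (m : ℝ) * ∑ i, B i ⟨0, hm⟩ := by
        rw [Finset.sum_congr rfl fun k _ => hallk k]
        simp [Finset.sum_const, Finset.card_univ, mul_comm]
      have hmul : (m : ℝ) * (∑ i, B i ⟨0, hm⟩) = (m : ℝ) := by
        rw [← hsum2]; exact hsumB
      have hm0 : (m : ℝ) ≠ 0 := ne_of_gt (by exact_mod_cast hm)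
      have hw0 : (∑ i, B i ⟨0, hm⟩) = 1 := by
        have := mul_left_cancel₀ hm0 (by rw [hmul, mul_one] : (m : ℝ) * (∑ i, B i ⟨0, hm⟩) = (m : ℝ) * 1)
        exact this
      rw [hallk jc, hw0]


  · rintro ⟨hA, hB⟩ f gf hgrad hconv hsmooth G hG
    ext X
    simp only [SKKT, SFix, Set.mem_setOf_eq]
    have honesB : (fun _ => (1 : ℝ)) ᵥ* B = fun _ => (1 : ℝ) := by
      funext j
      have h : ((fun _ => (1 : ℝ)) ᵥ* B) j = ∑ i, B i j := by
        simp [Matrix.vecMul, dotProduct]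
      rw [h]; exact hB j
    have honesIA : ∑ j, ((fun _ => (1 : ℝ)) ᵥ* (1 - A)) j = 0 := by
      have h1 : ∀ j, ((fun _ => (1 : ℝ)) ᵥ* (1 - A)) j
          = ∑ i, ((1 : Matrix (Fin m) (Fin m) ℝ) i j - A i j) := by
        intro j; simp [Matrix.vecMul, dotProduct, Matrix.sub_apply]
      rw [Finset.sum_congr rfl fun j _ => h1 j]
      have h2 : ∑ j, ∑ i, ((1 : Matrix (Fin m) (Fin m) ℝ) i j - A i j)
          = (∑ j, ∑ i, (1 : Matrix (Fin m) (Fin m) ℝ) i j) - ∑ j : Fin m, ∑ i, A i j := by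
        rw [← Finset.sum_sub_distrib]
        exact Finset.sum_congr rfl fun j _ => by rw [Finset.sum_sub_distrib]
      rw [h2]
      have h3 : ∑ j, ∑ i, (1 : Matrix (Fin m) (Fin m) ℝ) i j = (m : ℝ) := by
        simp [Matrix.one_apply]
      have h4 : ∑ j : Fin m, ∑ i, A i j = (m : ℝ) := by
        rw [Finset.sum_comm]; exact hA
      rw [h3, h4, sub_self]
    have h2 : (fun _ => (1 : ℝ)) ᵥ* (B * gradMat gf X)
        = (fun _ => (1 : ℝ)) ᵥ* gradMat gf X := by
      rw [← Matrix.vecMul_vecMul, honesB]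
    constructor
    · rintro ⟨Y, hSX, hsub⟩
      have hCX : C * X = 0 := (aux_sqrtX_zero_iff hC X).1 hSX
      refine ⟨hCX, -(gradMat gf X + (CFC.sqrt C) * Y), hsub, ?_⟩
      have h1 : (fun _ => (1 : ℝ)) ᵥ* ((1 - A) * X) = 0 := by
        rw [← Matrix.vecMul_vecMul]
        exact aux_vecMul_eq_zero hm honesIA fun i i' j => aux_rows_eq hCnull hCX i i' j
      have h3 : (fun _ => (1 : ℝ)) ᵥ* (-(gradMat gf X + (CFC.sqrt C) * Y))
          = -((fun _ => (1 : ℝ)) ᵥ* gradMat gf X) := by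
        rw [Matrix.vecMul_neg, Matrix.vecMul_add, ← Matrix.vecMul_vecMul,
          aux_ones_vecMul_sqrt hC hCnull, Matrix.zero_vecMul, add_zero]
      rw [h1, h2, h3, zero_add]
      module
    · rintro ⟨hCX, Ξ, hsub, heq⟩
      have hSX : (CFC.sqrt C) * X = 0 := (aux_sqrtX_zero_iff hC X).2 hCX
      have h1 : (fun _ => (1 : ℝ)) ᵥ* ((1 - A) * X) = 0 := by
        rw [← Matrix.vecMul_vecMul]
        exact aux_vecMul_eq_zero hm honesIA fun i i' j => aux_rows_eq hCnull hCX i i' j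
      rw [h1, zero_add, h2] at heq
      have hsum : ∀ j, ∑ i, (gradMat gf X i j + Ξ i j) = 0 := by
        intro j
        have hthis := congrFun heq j
        simp only [Pi.smul_apply, smul_eq_mul] at hthis
        have hvg : ((fun _ => (1 : ℝ)) ᵥ* gradMat gf X) j = ∑ i, gradMat gf X i j := by
          simp [Matrix.vecMul, dotProduct]
        have hvΞ : ((fun _ => (1 : ℝ)) ᵥ* Ξ) j = ∑ i, Ξ i j := by
          simp [Matrix.vecMul, dotProduct]
        rw [hvg, hvΞ] at hthis
        have h4 : γ * ((∑ i, gradMat gf X i j) + ∑ i, Ξ i j) = 0 := by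
          rw [mul_add, hthis]; ring
        have h5 := (mul_eq_zero.1 h4).resolve_left hγ'
        rw [Finset.sum_add_distrib]; exact h5
      obtain ⟨Y, hY⟩ := aux_sqrt_solve hC hCnull (-(gradMat gf X + Ξ)) (fun j => by
        have := hsum j
        simp only [Matrix.neg_apply, Matrix.add_apply, Finset.sum_neg_distrib]
        rw [this, neg_zero])
      refine ⟨Y, hSX, ?_⟩
      have hXi : -(gradMat gf X + (CFC.sqrt C) * Y) = Ξ := by
        rw [hY]; abel
      rw [hXi]; exact hsub
end
end

section
/- Assume A = B·D and B·C = C·B for matrices A, B, C, D ∈ ℝ^{m×m}, and let γ > 0. Let (Z^k, X^k, Y^k), k ≥ 0, be generated by: X^k = prox_{γg}(Z^k); Z^{k+1} = A X^k − γ B ∇f(X^k) − Y^k; Y^{k+1} = Y^k + C Z^{k+1}, with Y^0 = 0 and arbitrary Z^0. Define (Z̃^k, Ỹ^k), k ≥ 1, by Z̃^1 = Ỹ^1 = D X^0 − γ∇f(X^0) and, for k ≥ 1, Z̃^{k+1} = (D X̃^k − γ∇f(X̃^k)) − C Ỹ^k and Ỹ^{k+1} = (D X̃^k − γ∇f(X̃^k))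 + (I−C) Ỹ^k, where X̃^k = prox_{γg}(B Z̃^k). Then for every k ≥ 1: Z^k = B·Z̃^k and Y^k = B·C·Ỹ^k (and consequently X^k = X̃^k for all k ≥ 1). -/
noncomputable section

open Matrix Finset

/-- Proposition 1, part 1: the ABC iterates `(Z^k, X^k, Y^k)` are related
to the auxiliary (tilde) iterates by `Z^k = B·Z̃^k`, `Y^k = B·C·Ỹ^k` (hence `X^k = X̃^k`)
for all `k ≥ 1`. -/
theorem statement_2
    (m d : ℕ) (γ : ℝ) (hγ : 0 < γ)
    (f : Fin m → Vec d → ℝ) (gf : Fin m → Vec d → Vec d)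
    (hgrad : ∀ i, IsGradient (f i) (gf i))
    (hconv : ∀ i, ConvexOn ℝ Set.univ (f i))
    (G : Vec d → ℝ) (hG : ConvexOn ℝ Set.univ G)
    (P : Vec d → Vec d) (hP : ∀ z, IsProx G γ z (P z))
    (A B C D : Matrix (Fin m) (Fin m) ℝ)
    (hA : A = B * D) (hBC : B * C = C * B)
    (Z X Y : ℕ → Matrix (Fin m) (Fin d) ℝ)
    (hX : ∀ k, X k = rowsMap P (Z k))
    (hZ : ∀ k, Z (k + 1) = A * X k - γ • (B * gradMat gf (X k)) - Y k)
    (hY : ∀ k, Y (k + 1) = Y k + C * Z (k + 1))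
    (hY0 : Y 0 = 0)
    (Zt Yt : ℕ → Matrix (Fin m) (Fin d) ℝ)
    (hZt1 : Zt 1 = D * X 0 - γ • gradMat gf (X 0))
    (hYt1 : Yt 1 = D * X 0 - γ • gradMat gf (X 0))
    (hZt : ∀ k, 1 ≤ k →
      Zt (k + 1) =
        (D * rowsMap P (B * Zt k) - γ • gradMat gf (rowsMap P (B * Zt k))) - C * Yt k)
    (hYt : ∀ k, 1 ≤ k →
      Yt (k + 1) =
        (D * rowsMap P (B * Zt k) - γ • gradMat gf (rowsMap P (B * Zt k))) + (1 - C) * Yt k) :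
    ∀ k, 1 ≤ k → Z k = B * Zt k ∧ Y k = B * C * Yt k ∧ X k = rowsMap P (B * Zt k) := by
  intro k hk
  induction k, hk using Nat.le_induction with
  | base =>
    have hZ1 : Z 1 = B * Zt 1 := by
      rw [hZ 0, hY0, hA, hZt1, sub_zero, Matrix.mul_sub, Matrix.mul_assoc, Matrix.mul_smul]
    refine ⟨hZ1, ?_, ?_⟩
    · rw [hY 0, hY0, hZ1, hYt1, ← hZt1, zero_add, ← Matrix.mul_assoc, ← hBC, Matrix.mul_assoc]
    · rw [hX 1, hZ1]
  | succ k hk ih =>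
    obtain ⟨ihZ, ihY, ihX⟩ := ih
    have hZk : Z (k + 1) = B * Zt (k + 1) := by
      rw [hZ k, ihX, ihY, hA, hZt k hk]
      simp [Matrix.mul_sub, Matrix.mul_assoc, Matrix.mul_smul]
    have hYtrec : Yt (k + 1) = Zt (k + 1) + Yt k := by
      rw [hYt k hk, hZt k hk, Matrix.sub_mul, Matrix.one_mul]
      abel
    refine ⟨hZk, ?_, ?_⟩
    · rw [hY k, ihY, hZk, hYtrec, Matrix.mul_add, ← Matrix.mul_assoc C B, ← hBC]
      abel
    · rw [hX (k + 1), hZk]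
end
end

section
/- Let A = B·D with B, C, D ∈ ℝ^{m×m}, B and C symmetric, C positive semidefinite with null space exactly span{1}, 1ᵀA1 = m and 1ᵀB = 1ᵀ, and let γ > 0. Suppose each f_i is differentiable and convex and G is convex, and suppose (Z̃*, W*) ∈ ℝ^{m×d} × ℝ^{m×d} satisfies Z̃* = (D X* − γ∇f(X*)) − √C·W* and W* = √C·(D X* − γ∇f(X*)) + (I−C)·W*, where X* = prox_{γg}(B Z̃*). Then X* = 1·(x*)ᵀ for some global minimizer x* of F + G over ℝ^d. -/
noncomputable section

open Matrix Finset

/-- The old `Matrix.PosSemidef.sqrt` (removed from Mathlib), with its old definition. -/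
def psdSqrt {n : Type*} [Fintype n] [DecidableEq n] {A : Matrix n n ℝ} (hA : A.PosSemidef) :
    Matrix n n ℝ :=
  hA.1.eigenvectorUnitary.1 * diagonal ((↑) ∘ (√·) ∘ hA.1.eigenvalues) *
    (star hA.1.eigenvectorUnitary : Matrix n n ℝ)


section AuxLemmas

lemma psdSqrt_mul_self {n : Type*} [Fintype n] [DecidableEq n] {A : Matrix n n ℝ}
    (hA : A.PosSemidef) : psdSqrt hA * psdSqrt hA = A := by
  have hU : (star hA.1.eigenvectorUnitary : Matrix n n ℝ) *
      (hA.1.eigenvectorUnitary : Matrix n n ℝ) = 1 :=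
    Unitary.coe_star_mul_self _
  conv_rhs => rw [hA.1.spectral_theorem, Unitary.conjStarAlgAut_apply]
  simp only [psdSqrt, Matrix.mul_assoc]
  rw [← Matrix.mul_assoc (star _ : Matrix n n ℝ) _, hU, Matrix.one_mul,
    ← Matrix.mul_assoc (diagonal _), diagonal_mul_diagonal]
  congr 3
  funext i
  simp [Real.mul_self_sqrt (hA.eigenvalues_nonneg i)]

lemma psdSqrt_transpose {n : Type*} [Fintype n] [DecidableEq n] {A : Matrix n n ℝ}
    (hA : A.PosSemidef) : (psdSqrt hA)ᵀ = psdSqrt hA := by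
  rw [← Matrix.conjTranspose_eq_transpose_of_trivial]
  simp [psdSqrt, Matrix.mul_assoc, Matrix.star_eq_conjTranspose]

lemma grad_ineq {d : ℕ} {f : Vec d → ℝ} {g x : Vec d}
    (hf : ConvexOn ℝ Set.univ f) (hg : HasGradientAt f g x) (y : Vec d) :
    f x + (inner ℝ g (y - x) : ℝ) ≤ f y := by
  set φ : ℝ → Vec d := fun t => x + t • (y - x) with hφ
  have hL : HasDerivAt φ (y - x) 0 := by
    simpa [hφ] using ((hasDerivAt_id (0:ℝ)).smul_const (y - x)).const_add x
  have hF : HasFDerivAt f (InnerProductSpace.toDual ℝ (Vec d) g) x :=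
    hasGradientAt_iff_hasFDerivAt.mp hg
  have hφ0 : φ 0 = x := by simp [hφ]
  have hF' : HasFDerivAt f (InnerProductSpace.toDual ℝ (Vec d) g) (φ 0) := by
    rw [hφ0]; exact hF
  have hd : HasDerivAt (f ∘ φ) ((inner ℝ g (y - x) : ℝ)) 0 := by
    simpa [InnerProductSpace.toDual_apply_apply] using hF'.comp_hasDerivAt (0:ℝ) hL
  have hslope : ∀ t ∈ Set.Ioc (0:ℝ) 1, slope (f ∘ φ) 0 t ≤ f y - f x := by
    intro t ht
    have hconv : f ((1-t) • x + t • y) ≤ (1-t) * f x + t * f y :=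
      hf.2 (Set.mem_univ x) (Set.mem_univ y) (by linarith [ht.2]) (le_of_lt ht.1) (by ring)
    have hφt : φ t = (1 - t) • x + t • y := by
      simp [hφ, smul_sub, sub_smul]; module
    have h1 : f (φ t) ≤ (1 - t) * f x + t * f y := by rw [hφt]; simpa using hconv
    have h2 : slope (f ∘ φ) 0 t = (f (φ t) - f x) / t := by
      simp [slope, hφ0, Function.comp]; ring
    rw [h2, div_le_iff₀ ht.1]
    nlinarith [ht.1]
  have htend : Filter.Tendsto (slope (f ∘ φ) 0) (nhdsWithin 0 (Set.Ioi 0))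
      (nhds ((inner ℝ g (y - x) : ℝ))) :=
    (hasDerivAt_iff_tendsto_slope.mp hd).mono_left
      (nhdsWithin_mono 0 (fun a ha => Set.mem_compl_singleton_iff.mpr (ne_of_gt ha)))
  have hle : (inner ℝ g (y - x) : ℝ) ≤ f y - f x := by
    refine le_of_tendsto htend ?_
    filter_upwards [Ioc_mem_nhdsGT_of_mem (by norm_num : (0:ℝ) ∈ Set.Ico 0 1)] with t ht
    exact hslope t ht
  linarith

lemma prox_subgrad {d : ℕ} {G : Vec d → ℝ} {γ : ℝ} (hγ : 0 < γ)
    (hG : ConvexOn ℝ Set.univ G) {z p : Vec d} (hp : IsProx G γ z p) (y : Vec d) :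
    G p + γ⁻¹ * (inner ℝ (z - p) (y - p) : ℝ) ≤ G y := by
  set I : ℝ := (inner ℝ (p - z) (y - p) : ℝ) with hI
  set Q : ℝ := ‖y - p‖ ^ 2 with hQ
  have h2γ : (0:ℝ) < 2 * γ := by linarith
  have key : ∀ t ∈ Set.Ioc (0:ℝ) 1, G p - G y ≤ I / γ + t * (Q / (2 * γ)) := by
    intro t ht
    have hGc : G ((1-t) • p + t • y) ≤ (1-t) * G p + t * G y :=
      hG.2 (Set.mem_univ p) (Set.mem_univ y) (by linarith [ht.2]) (le_of_lt ht.1) (by ring)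
    have hpt : (1-t) • p + t • y - z = (p - z) + t • (y - p) := by module
    have hnorm : ‖(1-t) • p + t • y - z‖ ^ 2 = ‖p - z‖ ^ 2 + 2 * t * I + t ^ 2 * Q := by
      rw [hpt, norm_add_sq_real, real_inner_smul_right, norm_smul]
      simp [abs_of_pos ht.1, mul_pow, hI, hQ]
      ring
    have hprox := hp ((1-t) • p + t • y)
    rw [hnorm] at hprox
    have hne : (2 * γ) ≠ 0 := ne_of_gt h2γ
    have hstep : G p + ‖p - z‖ ^ 2 / (2 * γ)
        ≤ ((1-t) * G p + t * G y) + (‖p - z‖ ^ 2 + 2 * t * I + t ^ 2 * Q) / (2 * γ) := by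
      linarith [hprox, hGc]
    have hmul := mul_le_mul_of_nonneg_left hstep h2γ.le
    rw [mul_add, mul_add, mul_div_cancel₀ _ hne, mul_div_cancel₀ _ hne] at hmul
    have h1 : t * (2 * γ) * (G p - G y) ≤ 2 * t * I + t ^ 2 * Q := by nlinarith [hmul]
    rw [← sub_nonneg]
    have ht0 := ht.1
    have hexp : I / γ + t * (Q / (2 * γ)) - (G p - G y)
        = ((2 * t * I + t ^ 2 * Q) - t * (2 * γ) * (G p - G y)) / (t * (2 * γ)) := by
      field_simp
    rw [hexp]
    exact div_nonneg (by linarith [h1]) (by positivity)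
  have htend : Filter.Tendsto (fun t : ℝ => I / γ + t * (Q / (2 * γ)))
      (nhdsWithin 0 (Set.Ioi 0)) (nhds (I / γ)) := by
    have h0 : Filter.Tendsto (fun t : ℝ => I / γ + t * (Q / (2 * γ))) (nhds 0)
        (nhds (I / γ + 0 * (Q / (2 * γ)))) :=
      ((continuous_const.add (continuous_id.mul continuous_const)).tendsto 0)
    simpa using h0.mono_left nhdsWithin_le_nhds
  have hlim : G p - G y ≤ I / γ := by
    refine ge_of_tendsto htend ?_
    filter_upwards [Ioc_mem_nhdsGT_of_mem (by norm_num : (0:ℝ) ∈ Set.Ico 0 1)] with t ht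
    exact key t ht
  have h1 : (inner ℝ (z - p) (y - p) : ℝ) = -I := by
    rw [hI, ← inner_neg_left]; congr 1; abel
  rw [h1]
  have h2 : γ⁻¹ * (-I) = -(I / γ) := by field_simp
  rw [h2]
  linarith

end AuxLemmas

/-- Proposition 1, part 3: every fixed point of the split operator yields
a consensual matrix `X* = 1·(x*)ᵀ` with `x*` a global minimizer of `F + G`. -/
theorem statement_3
    (m d : ℕ) (hm : 0 < m) (hd : 0 < d) (γ : ℝ) (hγ : 0 < γ)
    (f : Fin m → Vec d → ℝ) (gf : Fin m → Vec d → Vec d)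
    (hgrad : ∀ i, IsGradient (f i) (gf i))
    (hconv : ∀ i, ConvexOn ℝ Set.univ (f i))
    (G : Vec d → ℝ) (hG : ConvexOn ℝ Set.univ G)
    (P : Vec d → Vec d) (hP : ∀ z, IsProx G γ z (P z))
    (A B C D : Matrix (Fin m) (Fin m) ℝ)
    (hA : A = B * D) (hBs : B.IsSymm)
    (hC : C.PosSemidef) (hCnull : NullSpanOnes C)
    (hA1 : (∑ i, ∑ j, A i j) = (m : ℝ)) (hB1 : ∀ j, ∑ i, B i j = 1)
    (Zt W Xs : Matrix (Fin m) (Fin d) ℝ)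
    (hXs : Xs = rowsMap P (B * Zt))
    (hfix1 : Zt = (D * Xs - γ • gradMat gf Xs) - psdSqrt hC * W)
    (hfix2 : W = psdSqrt hC * (D * Xs - γ • gradMat gf Xs) + (1 - C) * W) :
    ∃ xstar : Vec d, Xs = oneOuter m xstar ∧
      ∀ x : Vec d, Fbar f xstar + G xstar ≤ Fbar f x + G x := by

  classical
  set S := psdSqrt hC with hS
  set N := gradMat gf Xs with hN
  set V := D * Xs - γ • N with hV
  have hm0 : (0:ℝ) < (m:ℝ) := by exact_mod_cast hm
  -- symmetry of S
  have hSsymmM : Sᵀ = S := by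
    exact psdSqrt_transpose hC
  have hSsymm : ∀ i j, S i j = S j i := by
    intro i j
    have h := congrFun (congrFun hSsymmM i) j
    rw [Matrix.transpose_apply] at h
    exact h.symm
  -- kernel of C transfers to S
  have hker : ∀ v : Fin m → ℝ, C *ᵥ v = 0 → S *ᵥ v = 0 := by
    intro v hv
    have h0 : (S *ᵥ v) ⬝ᵥ (S *ᵥ v) = 0 := by
      have h1 : v ⬝ᵥ (C *ᵥ v) = 0 := by rw [hv]; simp
      have h2 : v ⬝ᵥ (C *ᵥ v) = (S *ᵥ v) ⬝ᵥ (S *ᵥ v) := by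
        rw [show C = S * S from (psdSqrt_mul_self hC).symm, ← Matrix.mulVec_mulVec,
          Matrix.dotProduct_mulVec, ← Matrix.mulVec_transpose, hSsymmM]
      rw [← h2, h1]
    exact dotProduct_self_eq_zero.mp h0
  have hC1 : C *ᵥ (fun _ => (1:ℝ)) = 0 := (hCnull _).mpr ⟨1, rfl⟩
  have hS1 : S *ᵥ (fun _ => (1:ℝ)) = 0 := hker _ hC1
  have hScol : ∀ k, ∑ i, S i k = 0 := by
    intro k
    have h := congrFun hS1 k
    simp [Matrix.mulVec, dotProduct] at h
    calc ∑ i, S i k = ∑ i, S k i := by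
          exact Finset.sum_congr rfl fun i _ => hSsymm i k
      _ = 0 := h
  -- fixed point algebra
  have hCW : C * W = S * V := by
    have h := hfix2
    rw [Matrix.sub_mul, Matrix.one_mul] at h
    have h2 : S * V = W - (W - C * W) := eq_sub_of_add_eq h.symm
    rw [sub_sub_cancel] at h2
    exact h2.symm
  have hzero : S * (S * W - V) = 0 := by
    rw [Matrix.mul_sub, ← Matrix.mul_assoc, show S * S = C from psdSqrt_mul_self hC, hCW,
      sub_self]
  -- columns of S*W - V are constant
  have hcols : ∀ j, ∃ c : ℝ, ∀ i, (S * W - V) i j = c := by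
    intro j
    have hv : S *ᵥ (fun i => (S * W - V) i j) = 0 := by
      funext i
      have h := congrFun (congrFun hzero i) j
      simpa [Matrix.mulVec, dotProduct, Matrix.mul_apply] using h
    have hvC : C *ᵥ (fun i => (S * W - V) i j) = 0 := by
      rw [show C = S * S from (psdSqrt_mul_self hC).symm, ← Matrix.mulVec_mulVec, hv]
      simp
    obtain ⟨c, hc⟩ := (hCnull _).mp hvC
    exact ⟨c, fun i => congrFun hc i⟩
  choose u hu using hcols
  -- entries of Zt
  have hZt : ∀ i j, Zt i j = - u j := by
    intro i j
    have h2 := hu j i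
    have h := congrFun (congrFun hfix1 i) j
    rw [Matrix.sub_apply] at h h2
    linarith
  -- row sums of B
  have hBrow : ∀ i, ∑ k, B i k = 1 := by
    intro i
    calc ∑ k, B i k = ∑ k, B k i := by
          exact Finset.sum_congr rfl fun k _ => (congrFun (congrFun hBs i) k).symm
      _ = 1 := hB1 i
  -- rows of B * Zt are constant
  have hBZt : ∀ i, (B * Zt) i = fun j => - u j := by
    intro i; funext j
    rw [Matrix.mul_apply]
    calc ∑ k, B i k * Zt k j = ∑ k, B i k * (- u j) := by
          exact Finset.sum_congr rfl fun k _ => by rw [hZt]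
      _ = (∑ k, B i k) * (- u j) := (Finset.sum_mul _ _ _).symm
      _ = - u j := by rw [hBrow i, one_mul]
  set z : Vec d := toVec (fun j => - u j) with hz
  set xstar := P z with hxstar
  have hrow : ∀ i, toVec ((B * Zt) i) = z := by
    intro i; rw [hz]; exact congrArg toVec (hBZt i)
  have hXeq : Xs = oneOuter m xstar := by
    ext i j
    rw [hXs]
    show ofVec (P (toVec ((B * Zt) i))) j = ofVec xstar j
    rw [hrow i]
  have hXrowi : ∀ i, Xs i = ofVec xstar := by
    intro i; funext j
    exact congrFun (congrFun hXeq i) j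
  have hXi : ∀ i, toVec (Xs i) = xstar := by
    intro i; rw [hXrowi i]; simp [toVec, ofVec]
  have hNij : ∀ i j, N i j = (gf i xstar) j := by
    intro i j
    have h : N i j = (gf i (toVec (Xs i))) j := rfl
    rw [h, hXi i]
  -- total sum of D
  have hD1 : ∑ k, ∑ j, D k j = (m:ℝ) := by
    have h := hA1
    rw [hA] at h
    simp_rw [Matrix.mul_apply] at h
    have h3 : ∑ i, ∑ j, ∑ k, B i k * D k j = ∑ k, ∑ j, D k j := by
      calc ∑ i, ∑ j, ∑ k, B i k * D k j
          = ∑ j, ∑ i, ∑ k, B i k * D k j := Finset.sum_comm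
        _ = ∑ j, ∑ k, ∑ i, B i k * D k j :=
            Finset.sum_congr rfl fun j _ => Finset.sum_comm
        _ = ∑ j, ∑ k, D k j := by
            refine Finset.sum_congr rfl fun j _ => Finset.sum_congr rfl fun k _ => ?_
            have : ∑ i, B i k * D k j = (∑ i, B i k) * D k j := (Finset.sum_mul _ _ _).symm
            rw [this, hB1 k, one_mul]
        _ = ∑ k, ∑ j, D k j := Finset.sum_comm
    exact h3.symm.trans h
  -- the key column-sum identity
  have hkey : ∀ j, (m:ℝ) * u j = γ * (∑ i, (gf i xstar) j) - (m:ℝ) * xstar j := by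
    intro j
    have h1 : ∑ i, (S * W - V) i j = (m:ℝ) * u j := by
      calc ∑ i, (S * W - V) i j = ∑ _i : Fin m, u j :=
            Finset.sum_congr rfl fun i _ => hu j i
        _ = (m:ℝ) * u j := by
            rw [Finset.sum_const, Finset.card_univ, Fintype.card_fin, nsmul_eq_mul]
    have h2 : ∑ i, (S * W) i j = 0 := by
      simp_rw [Matrix.mul_apply]
      rw [Finset.sum_comm]
      calc ∑ k, ∑ i, S i k * W k j = ∑ k : Fin m, (∑ i, S i k) * W k j :=
            Finset.sum_congr rfl fun k _ => (Finset.sum_mul _ _ _).symm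
        _ = 0 := by
            refine Finset.sum_eq_zero fun k _ => ?_
            rw [hScol k, zero_mul]
    have hXkj : ∀ k, Xs k j = xstar j := by
      intro k; rw [hXrowi k]; rfl
    have hDX : ∑ i, (D * Xs) i j = (m:ℝ) * xstar j := by
      simp_rw [Matrix.mul_apply]
      calc ∑ i, ∑ k, D i k * Xs k j = ∑ i, ∑ k, D i k * xstar j := by
            refine Finset.sum_congr rfl fun i _ => Finset.sum_congr rfl fun k _ => ?_
            rw [hXkj k]
        _ = (∑ i, ∑ k, D i k) * xstar j := by
            rw [Finset.sum_mul]
            refine Finset.sum_congr rfl fun i _ => ?_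
            rw [Finset.sum_mul]
        _ = (m:ℝ) * xstar j := by rw [hD1]
    have hNj : ∑ i, N i j = ∑ i, (gf i xstar) j :=
      Finset.sum_congr rfl fun i _ => by rw [hNij]
    have hVj : ∑ i, V i j = (m:ℝ) * xstar j - γ * ∑ i, (gf i xstar) j := by
      have hVe : ∀ i, V i j = (D * Xs) i j - γ * N i j := by
        intro i
        rw [hV, Matrix.sub_apply, Matrix.smul_apply, smul_eq_mul]
      calc ∑ i, V i j = ∑ i, ((D * Xs) i j - γ * N i j) :=
            Finset.sum_congr rfl fun i _ => hVe i
        _ = ∑ i, (D * Xs) i j - γ * ∑ i, N i j := by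
            rw [Finset.sum_sub_distrib, Finset.mul_sum]
        _ = (m:ℝ) * xstar j - γ * ∑ i, (gf i xstar) j := by rw [hDX, hNj]
    have h4 : ∑ i, (S * W - V) i j = ∑ i, (S * W) i j - ∑ i, V i j := by
      simp_rw [Matrix.sub_apply]
      rw [Finset.sum_sub_distrib]
    rw [h1, h2, hVj] at h4
    linarith
  -- coordinates of z - xstar
  have hzx : ∀ j, z j - xstar j = -(γ * ((m:ℝ)⁻¹ * ∑ i, (gf i xstar) j)) := by
    intro j
    have hzj : z j = - u j := rfl
    have h := hkey j
    have hmne : (m:ℝ) ≠ 0 := ne_of_gt hm0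
    rw [hzj]
    field_simp
    linarith
  refine ⟨xstar, hXeq, ?_⟩
  intro y
  have hproxsub : G xstar + γ⁻¹ * (inner ℝ (z - xstar) (y - xstar) : ℝ) ≤ G y := by
    rw [hxstar]; exact prox_subgrad hγ hG (hP z) y
  have hginq : ∀ i, f i xstar + (inner ℝ (gf i xstar) (y - xstar) : ℝ) ≤ f i y :=
    fun i => grad_ineq (hconv i) (hgrad i xstar) y
  set T : ℝ := ∑ i, (inner ℝ (gf i xstar) (y - xstar) : ℝ) with hT
  have hinnz : (inner ℝ (z - xstar) (y - xstar) : ℝ) = -(γ * ((m:ℝ)⁻¹ * T)) := by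
    rw [hT]
    simp_rw [PiLp.inner_apply, RCLike.inner_apply', conj_trivial]
    have hsub : ∀ j, (z - xstar) j = z j - xstar j := fun j => rfl
    have hsub2 : ∀ (w : Vec d) j, (y - xstar) j = y j - xstar j := fun _ j => rfl
    calc ∑ j, (z - xstar) j * (y - xstar) j
        = ∑ j, (-(γ * ((m:ℝ)⁻¹ * ∑ i, (gf i xstar) j))) * (y - xstar) j := by
          refine Finset.sum_congr rfl fun j _ => ?_
          rw [hsub j, hzx j]
      _ = -(γ * ((m:ℝ)⁻¹ * ∑ j, (∑ i, (gf i xstar) j) * (y - xstar) j)) := by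
          rw [Finset.mul_sum, Finset.mul_sum, ← Finset.sum_neg_distrib]
          refine Finset.sum_congr rfl fun j _ => ?_
          ring
      _ = -(γ * ((m:ℝ)⁻¹ * ∑ i, ∑ j, (gf i xstar) j * (y - xstar) j)) := by
          congr 2
          rw [Finset.sum_comm]
          refine congrArg _ (Finset.sum_congr rfl fun j _ => ?_)
          rw [Finset.sum_mul]
  have hGx : G xstar - (m:ℝ)⁻¹ * T ≤ G y := by
    have hγne : γ ≠ 0 := ne_of_gt hγ
    have he : γ⁻¹ * (-(γ * ((m:ℝ)⁻¹ * T))) = -((m:ℝ)⁻¹ * T) := by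
      field_simp
    rw [hinnz, he] at hproxsub
    linarith
  have hsumf : ∑ i, f i xstar + T ≤ ∑ i, f i y := by
    have h := Finset.sum_le_sum (fun i (_ : i ∈ Finset.univ) => hginq i)
    rw [Finset.sum_add_distrib] at h
    rw [hT]
    exact h
  have hFx : (m:ℝ)⁻¹ * (∑ i, f i xstar) + (m:ℝ)⁻¹ * T ≤ (m:ℝ)⁻¹ * ∑ i, f i y := by
    have h := mul_le_mul_of_nonneg_left hsumf (by positivity : (0:ℝ) ≤ (m:ℝ)⁻¹)
    rw [mul_add] at h
    exact h
  simp only [Fbar, one_div]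
  linarith
end
end

section
/- Let each f_i : ℝ^d → ℝ be differentiable, μ-strongly convex and L-smooth with 0 < μ ≤ L, and let D ∈ ℝ^{m×m} be symmetric with 0 ≺ D ⪯ I. Set L' = L/λ_min(D) and μ' = μ/λ_max(D). If 0 < γ ≤ 2/(L' + μ'), then for all X, Y ∈ ℝ^{m×d}: ‖(D·X − γ∇f(X)) − (D·Y − γ∇f(Y))‖² ≤ (1 − 2γL'μ'/(L'+μ'))·‖X − Y‖²_D. Moreover, for γ = 2/(L'+μ') the contraction factor equals ((L'−μ')/(L'+μ'))² = ((κ − η(D))/(κ + η(D)))², where κ = L/μ and η(D) = λ_min(D)/λ_max(D). -/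
noncomputable section

open Matrix Finset

/-! ### Auxiliary lemmas -/

lemma line_hasDerivAt {d : ℕ} (f : Vec d → ℝ) (g : Vec d → Vec d) (hg : IsGradient f g)
    (x v : Vec d) (t : ℝ) :
    HasDerivAt (fun s : ℝ => f (x + s • v)) (inner ℝ (g (x + t • v)) v : ℝ) t := by
  have h1 : HasDerivAt (fun s : ℝ => x + s • v) v t := by
    simpa using ((hasDerivAt_id t).smul_const v).const_add x
  have h2 := (hg (x + t • v)).hasFDerivAt
  have := h2.comp_hasDerivAt t h1
  exact this

lemma sc_lower {d : ℕ} {μ : ℝ} {f : Vec d → ℝ} {g : Vec d → Vec d}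
    (hg : IsGradient f g) (hsc : StrongConvexOn Set.univ μ f) (x y : Vec d) :
    f x + (inner ℝ (g x) (y - x) : ℝ) + μ / 2 * ‖y - x‖ ^ 2 ≤ f y := by
  set v := y - x with hv
  have hder : HasDerivAt (fun s : ℝ => f (x + s • v)) (inner ℝ (g x) v : ℝ) 0 := by
    simpa using line_hasDerivAt f g hg x v 0
  have hslope : Filter.Tendsto (slope (fun s : ℝ => f (x + s • v)) 0) (nhdsWithin 0 (Set.Ioi 0))
      (nhds (inner ℝ (g x) v : ℝ)) :=
    (hasDerivAt_iff_tendsto_slope.1 hder).mono_left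
      (nhdsWithin_mono 0 fun t ht => ne_of_gt ht)
  have hrhs : Filter.Tendsto (fun t : ℝ => (f y - f x) - (1 - t) * (μ / 2 * ‖x - y‖ ^ 2))
      (nhdsWithin 0 (Set.Ioi 0)) (nhds ((f y - f x) - μ / 2 * ‖x - y‖ ^ 2)) := by
    have hc : Continuous (fun t : ℝ => (f y - f x) - (1 - t) * (μ / 2 * ‖x - y‖ ^ 2)) := by
      continuity
    simpa using (hc.tendsto 0).mono_left nhdsWithin_le_nhds
  have hle : (inner ℝ (g x) v : ℝ) ≤ (f y - f x) - μ / 2 * ‖x - y‖ ^ 2 := by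
    refine le_of_tendsto_of_tendsto hslope hrhs ?_
    filter_upwards [Ioc_mem_nhdsGT_of_mem (Set.mem_Ico.2 ⟨le_rfl, one_pos⟩)] with t ht
    obtain ⟨ht0, ht1⟩ := ht
    have hpt : x + t • v = (1 - t) • x + t • y := by
      rw [hv, sub_smul, one_smul, smul_sub]; abel
    have hsc2 := hsc.2 (Set.mem_univ x) (Set.mem_univ y)
      (show (0:ℝ) ≤ 1 - t by linarith) ht0.le (show (1:ℝ) - t + t = 1 by ring)
    simp only [smul_eq_mul] at hsc2
    rw [slope_def_field, hpt]
    simp only [zero_smul, add_zero, sub_zero]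
    rw [div_le_iff₀ ht0]
    nlinarith [hsc2]
  have hxy : ‖x - y‖ = ‖y - x‖ := norm_sub_rev x y
  rw [hxy] at hle
  linarith

lemma smooth_upper {d : ℕ} {L : ℝ} {f : Vec d → ℝ} {g : Vec d → Vec d}
    (hg : IsGradient f g) (hs : LSmooth L g) (hL : 0 ≤ L) (x y : Vec d) :
    f y ≤ f x + (inner ℝ (g x) (y - x) : ℝ) + L / 2 * ‖y - x‖ ^ 2 := by
  set v := y - x with hv
  set ψ : ℝ → ℝ := fun t => f (x + t • v) - t * (inner ℝ (g x) v : ℝ) - L * t ^ 2 * ‖v‖ ^ 2 / 2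
    with hψ
  have hder : ∀ t : ℝ, HasDerivAt ψ
      ((inner ℝ (g (x + t • v)) v : ℝ) - (inner ℝ (g x) v : ℝ) - L * t * ‖v‖ ^ 2) t := by
    intro t
    have h1 := line_hasDerivAt f g hg x v t
    have h2 : HasDerivAt (fun s : ℝ => s * (inner ℝ (g x) v : ℝ) + L * s ^ 2 * ‖v‖ ^ 2 / 2)
        ((inner ℝ (g x) v : ℝ) + L * t * ‖v‖ ^ 2) t := by
      have ha := (hasDerivAt_id t).mul_const (inner ℝ (g x) v : ℝ)
      have hb := (((hasDerivAt_pow 2 t).const_mul L).mul_const (‖v‖ ^ 2)).div_const 2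
      refine (ha.add hb).congr_deriv ?_
      simp; ring
    have h12 := h1.sub h2
    have heq : ψ = fun s : ℝ =>
        f (x + s • v) - (s * (inner ℝ (g x) v : ℝ) + L * s ^ 2 * ‖v‖ ^ 2 / 2) := by
      funext s; simp only [hψ]; ring
    rw [heq]
    refine h12.congr_deriv ?_
    ring
  have hanti : AntitoneOn ψ (Set.Icc 0 1) := by
    apply antitoneOn_of_deriv_nonpos (convex_Icc 0 1)
    · exact fun t _ => ((hder t).differentiableAt).continuousAt.continuousWithinAt
    · exact fun t _ => ((hder t).differentiableAt).differentiableWithinAt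
    · intro t ht
      rw [interior_Icc] at ht
      rw [(hder t).deriv]
      have h3 : (inner ℝ (g (x + t • v)) v : ℝ) - (inner ℝ (g x) v : ℝ)
          = (inner ℝ (g (x + t • v) - g x) v : ℝ) := by rw [inner_sub_left]
      have h4 : (inner ℝ (g (x + t • v) - g x) v : ℝ) ≤ ‖g (x + t • v) - g x‖ * ‖v‖ :=
        real_inner_le_norm _ _
      have h5 : ‖g (x + t • v) - g x‖ ≤ L * ‖t • v‖ := by
        have := hs (x + t • v) x
        simpa using this
      have h6 : ‖t • v‖ = t * ‖v‖ := by
        rw [norm_smul, Real.norm_eq_abs, abs_of_pos ht.1]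
      have h7 : ‖g (x + t • v) - g x‖ * ‖v‖ ≤ L * t * ‖v‖ ^ 2 := by
        have := mul_le_mul_of_nonneg_right h5 (norm_nonneg v)
        rw [h6] at this
        nlinarith [norm_nonneg v]
      linarith [h3, h4]
  have h01 := hanti (Set.mem_Icc.2 ⟨le_rfl, zero_le_one⟩) (Set.mem_Icc.2 ⟨zero_le_one, le_rfl⟩)
    zero_le_one
  have hψ0 : ψ 0 = f x := by simp [hψ]
  have hψ1 : ψ 1 = f y - (inner ℝ (g x) v : ℝ) - L * ‖v‖ ^ 2 / 2 := by
    simp [hψ, hv]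
  rw [hψ0, hψ1] at h01
  have : L / 2 * ‖v‖ ^ 2 = L * ‖v‖ ^ 2 / 2 := by ring
  rw [hv] at *
  linarith

variable {n p : Type*} [Fintype n] [Fintype p]

lemma frInner_eq (X Y : Matrix n p ℝ) : frInner X Y = ∑ i, ∑ j, X i j * Y i j := by
  simp only [frInner, Matrix.trace, Matrix.diag, Matrix.mul_apply, Matrix.transpose_apply]
  exact Finset.sum_comm

lemma frInner_comm (X Y : Matrix n p ℝ) : frInner X Y = frInner Y X := by
  rw [frInner_eq, frInner_eq]
  exact Finset.sum_congr rfl fun i _ => Finset.sum_congr rfl fun j _ => mul_comm _ _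

lemma frInner_sub_left (X Y Z : Matrix n p ℝ) :
    frInner (X - Y) Z = frInner X Z - frInner Y Z := by
  simp [frInner_eq, Matrix.sub_apply, sub_mul, Finset.sum_sub_distrib]

lemma frInner_sub_right (X Y Z : Matrix n p ℝ) :
    frInner X (Y - Z) = frInner X Y - frInner X Z := by
  simp [frInner_eq, Matrix.sub_apply, mul_sub, Finset.sum_sub_distrib]

lemma frInner_add_right (X Y Z : Matrix n p ℝ) :
    frInner X (Y + Z) = frInner X Y + frInner X Z := by
  simp [frInner_eq, Matrix.add_apply, mul_add, Finset.sum_add_distrib]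

lemma frInner_smul_left (t : ℝ) (X Y : Matrix n p ℝ) :
    frInner (t • X) Y = t * frInner X Y := by
  simp [frInner_eq, Matrix.smul_apply, smul_eq_mul, Finset.mul_sum, mul_assoc]

lemma frInner_smul_right (t : ℝ) (X Y : Matrix n p ℝ) :
    frInner X (t • Y) = t * frInner X Y := by
  rw [frInner_comm, frInner_smul_left, frInner_comm]

lemma froSq_nonneg (X : Matrix n p ℝ) : 0 ≤ froSq X := by
  rw [froSq, frInner_eq]
  exact Finset.sum_nonneg fun i _ => Finset.sum_nonneg fun j _ => mul_self_nonneg _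

lemma frInner_mul_symm (D : Matrix n n ℝ) (hDs : Dᵀ = D) (P Q : Matrix n p ℝ) :
    frInner P (D * Q) = frInner Q (D * P) := by
  unfold frInner
  conv_lhs => rw [← Matrix.trace_transpose]
  rw [Matrix.transpose_mul, Matrix.transpose_mul, Matrix.transpose_transpose, hDs,
    Matrix.mul_assoc]

lemma frInner_cols (M : Matrix n n ℝ) (Z : Matrix n p ℝ) :
    frInner Z (M * Z) = ∑ j, (fun i => Z i j) ⬝ᵥ (M *ᵥ fun i => Z i j) := by
  rw [frInner_eq, Finset.sum_comm]
  refine Finset.sum_congr rfl fun j _ => ?_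
  simp [dotProduct, Matrix.mulVec, Matrix.mul_apply]

lemma froSq_cols (Z : Matrix n p ℝ) :
    froSq Z = ∑ j, (fun i => Z i j) ⬝ᵥ (fun i => Z i j) := by
  rw [froSq, frInner_eq, Finset.sum_comm]
  refine Finset.sum_congr rfl fun j _ => ?_
  simp [dotProduct]

lemma frInner_psd {M : Matrix n n ℝ} (hM : M.PosSemidef) (Z : Matrix n p ℝ) :
    0 ≤ frInner Z (M * Z) := by
  rw [frInner_cols]
  refine Finset.sum_nonneg fun j _ => ?_
  simpa using hM.dotProduct_mulVec_nonneg fun i => Z i j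

lemma inner_ofVec {d : ℕ} (u w : Vec d) : (inner ℝ u w : ℝ) = ∑ j, ofVec u j * ofVec w j := by
  simp [PiLp.inner_apply, ofVec, RCLike.inner_apply, mul_comm]

lemma norm_sq_ofVec {d : ℕ} (u : Vec d) : ‖u‖ ^ 2 = ∑ j, ofVec u j ^ 2 := by
  rw [← real_inner_self_eq_norm_sq, inner_ofVec]
  exact Finset.sum_congr rfl fun j _ => (sq _).symm

lemma ofVec_sub {d : ℕ} (u w : Vec d) : ofVec (u - w) = ofVec u - ofVec w := rfl

lemma frInner_grad {m d : ℕ} (gf : Fin m → Vec d → Vec d) (X Y : Matrix (Fin m) (Fin d) ℝ) :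
    frInner (gradMat gf X) (Y - X)
      = ∑ i, (inner ℝ (gf i (toVec (X i))) (toVec (Y i) - toVec (X i)) : ℝ) := by
  rw [frInner_eq]
  refine Finset.sum_congr rfl fun i _ => ?_
  rw [inner_ofVec]
  refine Finset.sum_congr rfl fun j _ => ?_
  simp [gradMat, ofVec, toVec, Matrix.sub_apply]

lemma froSq_rows {m d : ℕ} (X Y : Matrix (Fin m) (Fin d) ℝ) :
    froSq (Y - X) = ∑ i, ‖toVec (Y i) - toVec (X i)‖ ^ 2 := by
  rw [froSq, frInner_eq]
  refine Finset.sum_congr rfl fun i _ => ?_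
  rw [norm_sq_ofVec]
  refine Finset.sum_congr rfl fun j _ => ?_
  simp [ofVec, toVec, Matrix.sub_apply, sq]

variable {m : ℕ}

lemma star_real (U : Matrix (Fin m) (Fin m) ℝ) : star U = Uᵀ := by
  ext i j; simp [Matrix.star_apply]

lemma dot_self_pos {v : Fin m → ℝ} (hv : v ≠ 0) : 0 < v ⬝ᵥ v := by
  rcases lt_or_eq_of_le (Finset.sum_nonneg fun i _ => mul_self_nonneg (v i)) with h | h
  · exact h
  · exfalso
    apply hv
    funext i
    have := (Finset.sum_eq_zero_iff_of_nonneg fun i _ => mul_self_nonneg (v i)).1 h.symm i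
      (Finset.mem_univ i)
    show v i = 0
    exact mul_self_eq_zero.1 this

section eigsec
variable [Nonempty (Fin m)] (D : Matrix (Fin m) (Fin m) ℝ)

lemma quad_form_bounds (hD : D.IsHermitian) (v : Fin m → ℝ) :
    (Finset.univ.inf' Finset.univ_nonempty hD.eigenvalues) * (v ⬝ᵥ v) ≤ v ⬝ᵥ (D *ᵥ v) ∧
    v ⬝ᵥ (D *ᵥ v) ≤ (Finset.univ.sup' Finset.univ_nonempty hD.eigenvalues) * (v ⬝ᵥ v) := by
  classical
  set U : Matrix (Fin m) (Fin m) ℝ := (hD.eigenvectorUnitary : Matrix (Fin m) (Fin m) ℝ) with hU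
  have hU1 : U * star U = 1 := (Matrix.mem_unitaryGroup_iff).mp hD.eigenvectorUnitary.2
  set c : Fin m → ℝ := (star U) *ᵥ v with hc
  have hdiag : (RCLike.ofReal ∘ hD.eigenvalues : Fin m → ℝ) = hD.eigenvalues := by
    funext i; simp
  have key1 : v ⬝ᵥ (D *ᵥ v) = ∑ i, hD.eigenvalues i * c i ^ 2 := by
    conv_lhs => rw [hD.spectral_theorem, hdiag]
    rw [Unitary.conjStarAlgAut_apply, ← Matrix.mulVec_mulVec, ← Matrix.mulVec_mulVec, Matrix.dotProduct_mulVec v U]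
    have hvec : v ᵥ* U = c := by rw [hc, star_real, Matrix.mulVec_transpose]
    rw [hvec, ← hc]
    simp only [dotProduct, Matrix.mulVec_diagonal]
    exact Finset.sum_congr rfl fun i _ => by ring
  have key2 : v ⬝ᵥ v = ∑ i, c i ^ 2 := by
    have h1 : c ⬝ᵥ c = v ⬝ᵥ v := by
      rw [hc, Matrix.dotProduct_mulVec]
      have h2 : ((star U) *ᵥ v) ᵥ* (star U) = (U * star U) *ᵥ v := by
        rw [← Matrix.mulVec_transpose, star_real, Matrix.transpose_transpose,
          Matrix.mulVec_mulVec]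
      rw [h2, hU1, Matrix.one_mulVec]
    rw [← h1]
    exact Finset.sum_congr rfl fun i _ => (sq _).symm
  constructor
  · rw [key1, key2, Finset.mul_sum]
    exact Finset.sum_le_sum fun i _ =>
      mul_le_mul_of_nonneg_right (Finset.inf'_le _ (Finset.mem_univ i)) (sq_nonneg _)
  · rw [key1, key2, Finset.mul_sum]
    exact Finset.sum_le_sum fun i _ =>
      mul_le_mul_of_nonneg_right (Finset.le_sup' _ (Finset.mem_univ i)) (sq_nonneg _)

lemma eig_mem (hD : D.IsHermitian) (i : Fin m) : hD.eigenvalues i ∈ eigs D := by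
  refine ⟨⇑(hD.eigenvectorBasis i), ?_, hD.mulVec_eigenvectorBasis i⟩
  intro h
  have h0 : hD.eigenvectorBasis i = 0 := by
    ext j; exact congrFun h j
  have h1 : ‖hD.eigenvectorBasis i‖ = 1 := hD.eigenvectorBasis.orthonormal.1 i
  rw [h0] at h1
  simp at h1

lemma eig_in_Icc (hD : D.IsHermitian) {r : ℝ} (hr : r ∈ eigs D) :
    (Finset.univ.inf' Finset.univ_nonempty hD.eigenvalues) ≤ r ∧
    r ≤ (Finset.univ.sup' Finset.univ_nonempty hD.eigenvalues) := by
  obtain ⟨v, hv0, hvr⟩ := hr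
  have hs : 0 < v ⬝ᵥ v := dot_self_pos hv0
  have hb := quad_form_bounds D hD v
  rw [hvr] at hb
  have hsm : v ⬝ᵥ (r • v) = r * (v ⬝ᵥ v) := by
    simp [dotProduct, Finset.mul_sum]
    exact Finset.sum_congr rfl fun i _ => by ring
  rw [hsm] at hb
  exact ⟨le_of_mul_le_mul_right hb.1 hs, le_of_mul_le_mul_right hb.2 hs⟩

lemma lmin_eq (hD : D.IsHermitian) : lmin D = Finset.univ.inf' Finset.univ_nonempty hD.eigenvalues := by
  apply le_antisymm
  · obtain ⟨i, -, hi⟩ := Finset.exists_mem_eq_inf' Finset.univ_nonempty hD.eigenvalues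
    refine csInf_le ⟨_, fun r hr => (eig_in_Icc D hD hr).1⟩ ?_
    rw [hi]
    exact eig_mem D hD i
  · exact le_csInf ⟨_, eig_mem D hD (Classical.arbitrary _)⟩ fun r hr => (eig_in_Icc D hD hr).1

lemma lmax_eq (hD : D.IsHermitian) : lmax D = Finset.univ.sup' Finset.univ_nonempty hD.eigenvalues := by
  apply le_antisymm
  · exact csSup_le ⟨_, eig_mem D hD (Classical.arbitrary _)⟩ fun r hr => (eig_in_Icc D hD hr).2
  · obtain ⟨i, -, hi⟩ := Finset.exists_mem_eq_sup' Finset.univ_nonempty hD.eigenvalues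
    refine le_csSup ⟨_, fun r hr => (eig_in_Icc D hD hr).2⟩ ?_
    rw [hi]
    exact eig_mem D hD i

lemma lmin_quad (hD : D.IsHermitian) (v : Fin m → ℝ) : lmin D * (v ⬝ᵥ v) ≤ v ⬝ᵥ (D *ᵥ v) := by
  rw [lmin_eq D hD]; exact (quad_form_bounds D hD v).1

lemma lmax_quad (hD : D.IsHermitian) (v : Fin m → ℝ) : v ⬝ᵥ (D *ᵥ v) ≤ lmax D * (v ⬝ᵥ v) := by
  rw [lmax_eq D hD]; exact (quad_form_bounds D hD v).2

lemma lmin_le_lmax (hD : D.IsHermitian) : lmin D ≤ lmax D := by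
  rw [lmin_eq D hD, lmax_eq D hD]
  have i := Classical.arbitrary (Fin m)
  exact le_trans (Finset.inf'_le _ (Finset.mem_univ i)) (Finset.le_sup' _ (Finset.mem_univ i))

lemma lmin_pos (hD : D.IsHermitian) (hDpd : D.PosDef) : 0 < lmin D := by
  rw [lmin_eq D hD]
  obtain ⟨i, -, hi⟩ := Finset.exists_mem_eq_inf' Finset.univ_nonempty hD.eigenvalues
  rw [hi]
  exact hDpd.eigenvalues_pos i

end eigsec


variable {m d : ℕ}

section core
variable (D : Matrix (Fin m) (Fin m) ℝ)

lemma frInner_add_left (X Y Z : Matrix n p ℝ) :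
    frInner (X + Y) Z = frInner X Z + frInner Y Z := by
  simp [frInner_eq, Matrix.add_apply, add_mul, Finset.sum_add_distrib]

lemma Bexp_smul (a : ℝ) (P Q : Matrix (Fin m) (Fin d) ℝ) :
    frInner P (D * (a • Q)) = a * frInner P (D * Q) := by
  rw [Matrix.mul_smul, frInner_smul_right]

lemma Bexp_lin (a b : ℝ) (P Q R : Matrix (Fin m) (Fin d) ℝ) :
    frInner P (D * (a • Q + b • R)) = a * frInner P (D * Q) + b * frInner P (D * R) := by
  rw [Matrix.mul_add, Matrix.mul_smul, Matrix.mul_smul, frInner_add_right, frInner_smul_right,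
    frInner_smul_right]

lemma Bexp_quad (hDs : Dᵀ = D) (a b : ℝ) (Q R : Matrix (Fin m) (Fin d) ℝ) :
    frInner (a • Q + b • R) (D * (a • Q + b • R))
      = a ^ 2 * frInner Q (D * Q) + 2 * a * b * frInner Q (D * R)
        + b ^ 2 * frInner R (D * R) := by
  rw [frInner_add_left, frInner_smul_left, frInner_smul_left, Bexp_lin, Bexp_lin,
    frInner_mul_symm D hDs R Q]
  ring

lemma Bexp_quad1 (a : ℝ) (Q : Matrix (Fin m) (Fin d) ℝ) :
    frInner (a • Q) (D * (a • Q)) = a ^ 2 * frInner Q (D * Q) := by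
  rw [frInner_smul_left, Bexp_smul]
  ring

lemma star_core (hDs : Dᵀ = D)
    (hpsd : ∀ Z : Matrix (Fin m) (Fin d) ℝ, 0 ≤ frInner Z (D * Z))
    {μ' L' : ℝ} (hμ' : 0 < μ') (hμL' : μ' ≤ L')
    (F : Matrix (Fin m) (Fin d) ℝ → ℝ) (g : Matrix (Fin m) (Fin d) ℝ → Matrix (Fin m) (Fin d) ℝ)
    (lower : ∀ X Y, F X + frInner (g X) (D * (Y - X)) + μ' / 2 * frInner (Y - X) (D * (Y - X)) ≤ F Y)
    (upper : ∀ X Y, F Y ≤ F X + frInner (g X) (D * (Y - X)) + L' / 2 * frInner (Y - X) (D * (Y - X)))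
    (X Y : Matrix (Fin m) (Fin d) ℝ) :
    frInner (g X - g Y) (D * (g X - g Y)) + μ' * L' * frInner (X - Y) (D * (X - Y))
      ≤ (μ' + L') * frInner (g X - g Y) (D * (X - Y)) := by
  set u : Matrix (Fin m) (Fin d) ℝ := X - Y with hu
  set v : Matrix (Fin m) (Fin d) ℝ := g X - g Y with hv
  set Δ : Matrix (Fin m) (Fin d) ℝ := μ' • u + (-1 : ℝ) • v with hΔ
  set s1 := frInner u (D * u) with hs1
  set s2 := frInner v (D * u) with hs2
  set s3 := frInner v (D * v) with hs3
  set q := frInner Δ (D * Δ) with hqdef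
  set p1 := frInner (g X) (D * u) with hp1
  set p2 := frInner (g X) (D * Δ) with hp2
  set p3 := frInner (g Y) (D * u) with hp3
  set p4 := frInner (g Y) (D * Δ) with hp4
  set r := frInner u (D * Δ) with hr
  have hsymm : ∀ P Q : Matrix (Fin m) (Fin d) ℝ, frInner P (D * Q) = frInner Q (D * P) :=
    fun P Q => frInner_mul_symm D hDs P Q
  have hq : q = μ' ^ 2 * s1 - 2 * μ' * s2 + s3 := by
    rw [hqdef]
    conv_lhs => rw [hΔ]
    rw [Bexp_quad D hDs, hsymm u v]
    ring
  have hrval : r = μ' * s1 - s2 := by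
    rw [hr]
    conv_lhs => rw [hΔ]
    rw [Bexp_lin, hsymm u v]
    ring
  have hpw : p2 - p4 = μ' * s2 - s3 := by
    have : p2 - p4 = frInner v (D * Δ) := by
      rw [hp2, hp4, hv, frInner_sub_left]
    rw [this]
    conv_lhs => rw [hΔ]
    rw [Bexp_lin]
    ring
  have hvs : p1 - p3 = s2 := by
    rw [hp1, hp3, hs2, hv, frInner_sub_left]
  have hq0 : 0 ≤ q := hpsd Δ
  have key : ∀ t : ℝ, 2 * t * q - (L' - μ') * t ^ 2 * q ≤ s2 - μ' * s1 := by
    intro t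
    have h1 := (lower X (Y - t • Δ)).trans (upper Y (Y - t • Δ))
    have h2 := (lower Y (X + t • Δ)).trans (upper X (X + t • Δ))
    have e1 : Y - t • Δ - X = (-1 : ℝ) • u + (-t) • Δ := by
      rw [neg_one_smul, neg_smul, hu]; abel
    have e2 : Y - t • Δ - Y = (-t) • Δ := by rw [neg_smul]; abel
    have e3 : X + t • Δ - Y = (1 : ℝ) • u + t • Δ := by rw [one_smul, hu]; abel
    have e4 : X + t • Δ - X = t • Δ := by abel
    rw [e1, e2] at h1
    rw [e3, e4] at h2
    rw [Bexp_lin, Bexp_quad D hDs, Bexp_smul, Bexp_quad1] at h1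
    rw [Bexp_lin, Bexp_quad D hDs, Bexp_smul, Bexp_quad1] at h2
    rw [← hp1, ← hp2, ← hp4, ← hs1, ← hr, ← hqdef] at h1
    rw [← hp3, ← hp4, ← hp2, ← hs1, ← hr, ← hqdef] at h2
    have htp : t * p2 - t * p4 = t * (μ' * s2 - s3) := by rw [← mul_sub, hpw]
    have htr : μ' * (t * r) = μ' * (t * (μ' * s1 - s2)) := by rw [hrval]
    have htq : t * q = t * (μ' ^ 2 * s1 - 2 * μ' * s2 + s3) := by rw [hq]
    linarith [h1, h2, htp, htr, htq, hvs]
  rcases eq_or_lt_of_le hμL' with hEq | hLt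
  · have hq00 : q = 0 := by
      by_contra hne
      have hqpos : 0 < q := lt_of_le_of_ne hq0 (Ne.symm hne)
      have hk := key ((s2 - μ' * s1 + 1) / (2 * q))
      rw [← hEq, sub_self] at hk
      have h2q : 2 * ((s2 - μ' * s1 + 1) / (2 * q)) * q = s2 - μ' * s1 + 1 := by
        field_simp
      linarith [hk, h2q]
    rw [← hEq]
    linarith [hq, hq00]
  · have hd : 0 < L' - μ' := sub_pos.2 hLt
    have hk := key (1 / (L' - μ'))
    have h3 : 2 * (1 / (L' - μ')) * q - (L' - μ') * (1 / (L' - μ')) ^ 2 * q = q / (L' - μ') := by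
      field_simp
      ring
    rw [h3] at hk
    have h4 : q ≤ (L' - μ') * (s2 - μ' * s1) := by
      rw [div_le_iff₀ hd] at hk
      linarith [hk]
    linarith [h4, hq]

end core


lemma matrix_lower {m d : ℕ} {μ : ℝ} (f : Fin m → Vec d → ℝ) (gf : Fin m → Vec d → Vec d)
    (hgrad : ∀ i, IsGradient (f i) (gf i)) (hsc : ∀ i, StrongConvexOn Set.univ μ (f i))
    (X Y : Matrix (Fin m) (Fin d) ℝ) :
    fMat f X + frInner (gradMat gf X) (Y - X) + μ / 2 * froSq (Y - X) ≤ fMat f Y := by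
  rw [frInner_grad, froSq_rows]
  unfold fMat
  rw [Finset.mul_sum, ← Finset.sum_add_distrib, ← Finset.sum_add_distrib]
  exact Finset.sum_le_sum fun i _ => sc_lower (hgrad i) (hsc i) _ _

lemma matrix_upper {m d : ℕ} {L : ℝ} (f : Fin m → Vec d → ℝ) (gf : Fin m → Vec d → Vec d)
    (hgrad : ∀ i, IsGradient (f i) (gf i)) (hsmooth : ∀ i, LSmooth L (gf i)) (hL : 0 ≤ L)
    (X Y : Matrix (Fin m) (Fin d) ℝ) :
    fMat f Y ≤ fMat f X + frInner (gradMat gf X) (Y - X) + L / 2 * froSq (Y - X) := by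
  rw [frInner_grad, froSq_rows]
  unfold fMat
  rw [Finset.mul_sum, ← Finset.sum_add_distrib, ← Finset.sum_add_distrib]
  exact Finset.sum_le_sum fun i _ => smooth_upper (hgrad i) (hsmooth i) hL _ _

lemma froSq_mulD {m d : ℕ} (D : Matrix (Fin m) (Fin m) ℝ) (hDt : Dᵀ = D)
    (W : Matrix (Fin m) (Fin d) ℝ) : froSq (D * W) = frInner W (D * (D * W)) := by
  unfold froSq frInner
  rw [Matrix.transpose_mul, hDt, Matrix.mul_assoc]

lemma frInner_inv_mul {m d : ℕ} (D : Matrix (Fin m) (Fin m) ℝ) (hDt : Dᵀ = D)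
    (hdet : IsUnit D.det) (P Z : Matrix (Fin m) (Fin d) ℝ) :
    frInner (D⁻¹ * P) (D * Z) = frInner P Z := by
  unfold frInner
  rw [Matrix.transpose_mul, Matrix.transpose_nonsing_inv, hDt, Matrix.mul_assoc,
    ← Matrix.mul_assoc D⁻¹ D Z, Matrix.nonsing_inv_mul D hdet, Matrix.one_mul]

lemma sub_sq_psd {m : ℕ} (D : Matrix (Fin m) (Fin m) ℝ) (hDpd : D.PosDef)
    (hDI : (1 - D).PosSemidef) : (D - D * D).PosSemidef := by
  obtain ⟨S, hSH, hSmul⟩ : ∃ S : Matrix (Fin m) (Fin m) ℝ, Sᴴ = S ∧ S * S = D :=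
    by open scoped MatrixOrder in exact ⟨CFC.sqrt D, (CFC.sqrt_nonneg D).isSelfAdjoint, CFC.sqrt_mul_sqrt_self D hDpd.posSemidef.nonneg⟩
  have h1 : (Sᴴ * (1 - D) * S).PosSemidef := hDI.conjTranspose_mul_mul_same S
  have h2 : Sᴴ * (1 - D) * S = D - D * D := by
    rw [hSH, Matrix.mul_sub, Matrix.mul_one, Matrix.sub_mul, hSmul]
    congr 1
    rw [← hSmul]
    simp only [Matrix.mul_assoc]
  rw [h2] at h1
  exact h1

lemma id_one (Lp μp : ℝ) (h : 0 < Lp + μp) :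
    1 - 2 * (2 / (Lp + μp)) * Lp * μp / (Lp + μp) = ((Lp - μp) / (Lp + μp)) ^ 2 := by
  have hne : Lp + μp ≠ 0 := ne_of_gt h
  field_simp
  ring

lemma id_two (Lv μv a b : ℝ) (hμv : 0 < μv) (ha : 0 < a) (hb : 0 < b) (hLv : 0 < Lv) :
    ((Lv / a - μv / b) / (Lv / a + μv / b)) ^ 2
      = ((Lv / μv - a / b) / (Lv / μv + a / b)) ^ 2 := by
  have h1 : Lv / a + μv / b ≠ 0 := by positivity
  have h2 : Lv / μv + a / b ≠ 0 := by positivity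
  have hbase : (Lv / a - μv / b) / (Lv / a + μv / b)
      = (Lv / μv - a / b) / (Lv / μv + a / b) := by
    rw [div_eq_div_iff h1 h2]
    field_simp
  rw [hbase]

/-- Lemma 4, contraction of `T_f`: with `L' = L/λ_min(D)` and
`μ' = μ/λ_max(D)`, the map `X ↦ D·X − γ∇f(X)` is a contraction in the norms indicated,
with factor `1 − 2γL'μ'/(L'+μ')`; at `γ = 2/(L'+μ')` the factor equals
`((L'−μ')/(L'+μ'))² = ((κ−η(D))/(κ+η(D)))²`. -/
theorem statement_5
    (m d : ℕ) (hm : 0 < m) (μ L : ℝ) (hμ : 0 < μ) (hμL : μ ≤ L)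
    (f : Fin m → Vec d → ℝ) (gf : Fin m → Vec d → Vec d)
    (hgrad : ∀ i, IsGradient (f i) (gf i))
    (hsc : ∀ i, StrongConvexOn Set.univ μ (f i))
    (hsmooth : ∀ i, LSmooth L (gf i))
    (D : Matrix (Fin m) (Fin m) ℝ)
    (hDs : D.IsSymm) (hDpd : D.PosDef) (hDI : (1 - D).PosSemidef)
    (γ : ℝ) (hγ0 : 0 < γ) (hγ : γ ≤ 2 / (L / lmin D + μ / lmax D)) :
    (∀ X Y : Matrix (Fin m) (Fin d) ℝ,
      froSq ((D * X - γ • gradMat gf X) - (D * Y - γ • gradMat gf Y)) ≤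
        (1 - 2 * γ * (L / lmin D) * (μ / lmax D) / (L / lmin D + μ / lmax D)) *
          mnormSq D (X - Y)) ∧
    (1 - 2 * (2 / (L / lmin D + μ / lmax D)) * (L / lmin D) * (μ / lmax D) /
          (L / lmin D + μ / lmax D) =
        ((L / lmin D - μ / lmax D) / (L / lmin D + μ / lmax D)) ^ 2 ∧
      ((L / lmin D - μ / lmax D) / (L / lmin D + μ / lmax D)) ^ 2 =
        ((L / μ - lmin D / lmax D) / (L / μ + lmin D / lmax D)) ^ 2) := by
  have hNE : Nonempty (Fin m) := ⟨⟨0, hm⟩⟩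
  have hH : D.IsHermitian := hDpd.1
  have hDt : Dᵀ = D := hDs
  have hL0 : 0 < L := lt_of_lt_of_le hμ hμL
  have hlminpos : 0 < lmin D := lmin_pos D hH hDpd
  have hminmax : lmin D ≤ lmax D := lmin_le_lmax D hH
  have hlmaxpos : 0 < lmax D := lt_of_lt_of_le hlminpos hminmax
  have hμ'pos : 0 < μ / lmax D := div_pos hμ hlmaxpos
  have hL'pos : 0 < L / lmin D := div_pos hL0 hlminpos
  have hμL' : μ / lmax D ≤ L / lmin D := by
    rw [div_le_div_iff₀ hlmaxpos hlminpos]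
    exact mul_le_mul hμL hminmax hlminpos.le hL0.le
  have hS : 0 < L / lmin D + μ / lmax D := by linarith
  refine ⟨?_, id_one _ _ hS, id_two L μ (lmin D) (lmax D) hμ hlminpos hlmaxpos hL0⟩
  intro X Y
  have hdet : IsUnit D.det := hDpd.det_pos.ne'.isUnit
  have hDDpsd : (D - D * D).PosSemidef := sub_sq_psd D hDpd hDI
  have hmono : ∀ W : Matrix (Fin m) (Fin d) ℝ,
      frInner W (D * (D * W)) ≤ frInner W (D * W) := by
    intro W
    have h3 := frInner_psd hDDpsd W
    have h4 : (D - D * D) * W = D * W - D * (D * W) := by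
      rw [Matrix.sub_mul, Matrix.mul_assoc]
    rw [h4, frInner_sub_right] at h3
    linarith
  have hlow : ∀ Z : Matrix (Fin m) (Fin d) ℝ, lmin D * froSq Z ≤ frInner Z (D * Z) := by
    intro Z
    rw [frInner_cols, froSq_cols, Finset.mul_sum]
    exact Finset.sum_le_sum fun j _ => lmin_quad D hH _
  have hup : ∀ Z : Matrix (Fin m) (Fin d) ℝ, frInner Z (D * Z) ≤ lmax D * froSq Z := by
    intro Z
    rw [frInner_cols, froSq_cols, Finset.mul_sum]
    exact Finset.sum_le_sum fun j _ => lmax_quad D hH _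
  set gD : Matrix (Fin m) (Fin d) ℝ → Matrix (Fin m) (Fin d) ℝ :=
    fun Wa => D⁻¹ * gradMat gf Wa with hgDdef
  have hginv' : ∀ Wa (Z : Matrix (Fin m) (Fin d) ℝ),
      frInner (gD Wa) (D * Z) = frInner (gradMat gf Wa) Z := fun Wa Z =>
    frInner_inv_mul D hDt hdet _ _
  have lowerD : ∀ Xa Ya, fMat f Xa + frInner (gD Xa) (D * (Ya - Xa))
      + (μ / lmax D) / 2 * frInner (Ya - Xa) (D * (Ya - Xa)) ≤ fMat f Ya := by
    intro Xa Ya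
    have h1 := matrix_lower f gf hgrad hsc Xa Ya
    have h3 : (μ / lmax D) / 2 * frInner (Ya - Xa) (D * (Ya - Xa))
        ≤ μ / 2 * froSq (Ya - Xa) := by
      have h5 : (μ / lmax D) / 2 * frInner (Ya - Xa) (D * (Ya - Xa))
          ≤ (μ / lmax D) / 2 * (lmax D * froSq (Ya - Xa)) :=
        mul_le_mul_of_nonneg_left (hup (Ya - Xa)) (by positivity)
      have h6 : (μ / lmax D) / 2 * (lmax D * froSq (Ya - Xa)) = μ / 2 * froSq (Ya - Xa) := by
        field_simp
      linarith
    rw [hginv']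
    linarith
  have upperD : ∀ Xa Ya, fMat f Ya ≤ fMat f Xa + frInner (gD Xa) (D * (Ya - Xa))
      + (L / lmin D) / 2 * frInner (Ya - Xa) (D * (Ya - Xa)) := by
    intro Xa Ya
    have h1 := matrix_upper f gf hgrad hsmooth hL0.le Xa Ya
    have h3 : L / 2 * froSq (Ya - Xa)
        ≤ (L / lmin D) / 2 * frInner (Ya - Xa) (D * (Ya - Xa)) := by
      have h5 : (L / lmin D) / 2 * (lmin D * froSq (Ya - Xa))
          ≤ (L / lmin D) / 2 * frInner (Ya - Xa) (D * (Ya - Xa)) :=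
        mul_le_mul_of_nonneg_left (hlow (Ya - Xa)) (by positivity)
      have h6 : (L / lmin D) / 2 * (lmin D * froSq (Ya - Xa)) = L / 2 * froSq (Ya - Xa) := by
        field_simp
      linarith
    rw [hginv']
    linarith
  have hst := star_core D hDt (fun Z => frInner_psd hDpd.posSemidef Z) hμ'pos hμL'
    (fMat f) gD lowerD upperD X Y
  have hDg : D * (gD X - gD Y) = gradMat gf X - gradMat gf Y := by
    rw [hgDdef]
    simp only
    rw [Matrix.mul_sub, ← Matrix.mul_assoc, ← Matrix.mul_assoc,
      Matrix.mul_nonsing_inv D hdet, Matrix.one_mul, Matrix.one_mul]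
  have hrew : (D * X - γ • gradMat gf X) - (D * Y - γ • gradMat gf Y)
      = D * ((1 : ℝ) • (X - Y) + (-γ) • (gD X - gD Y)) := by
    rw [Matrix.mul_add, Matrix.mul_smul, Matrix.mul_smul, hDg, one_smul,
      Matrix.mul_sub, neg_smul, smul_sub]
    abel
  rw [hrew]
  set A := L / lmin D with hAd
  set B := μ / lmax D with hBd
  set W : Matrix (Fin m) (Fin d) ℝ := (1 : ℝ) • (X - Y) + (-γ) • (gD X - gD Y) with hW
  have h5 : froSq (D * W) ≤ frInner W (D * W) := by
    rw [froSq_mulD D hDt]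
    exact hmono _
  have h6 : frInner W (D * W) = frInner (X - Y) (D * (X - Y))
      - 2 * γ * frInner (gD X - gD Y) (D * (X - Y))
      + γ ^ 2 * frInner (gD X - gD Y) (D * (gD X - gD Y)) := by
    rw [hW, Bexp_quad D hDt, frInner_mul_symm D hDt (X - Y) (gD X - gD Y)]
    ring
  have hs3n : 0 ≤ frInner (gD X - gD Y) (D * (gD X - gD Y)) :=
    frInner_psd hDpd.posSemidef _
  have hγS : γ * (A + B) ≤ 2 := (le_div_iff₀ hS).1 hγ
  have hms : mnormSq D (X - Y) = frInner (X - Y) (D * (X - Y)) := rfl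
  rw [hms]
  set q0 := froSq (D * W) with hq0d
  set s1 := frInner (X - Y) (D * (X - Y)) with hs1d
  set s2 := frInner (gD X - gD Y) (D * (X - Y)) with hs2d
  set s3 := frInner (gD X - gD Y) (D * (gD X - gD Y)) with hs3d
  have hfinal : (A + B) * q0 ≤ (A + B) * ((1 - 2 * γ * A * B / (A + B)) * s1) := by
    have hexp : (A + B) * ((1 - 2 * γ * A * B / (A + B)) * s1)
        = (A + B) * s1 - 2 * γ * A * B * s1 := by
      field_simp
    rw [hexp]
    have hb1 : (A + B) * q0 ≤ (A + B) * (s1 - 2 * γ * s2 + γ ^ 2 * s3) :=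
      mul_le_mul_of_nonneg_left (h5.trans (le_of_eq h6)) hS.le
    have hb2 := mul_le_mul_of_nonneg_left hst (by positivity : (0 : ℝ) ≤ 2 * γ)
    have hb3 : 0 ≤ γ * s3 * (2 - γ * (A + B)) :=
      mul_nonneg (mul_nonneg hγ0.le hs3n) (by linarith)
    linarith [hb1, hb2, hb3]
  exact le_of_mul_le_mul_left hfinal hS
end
end

section
/- Assume A = B·D and B·C = C·B for matrices A, B, C, D ∈ ℝ^{m×m}, and let γ > 0. Let {(X^k, Y^k)} be generated by X^{k+1} = A·X^k − γ·B·∇f(X^k) − Y^k, Y^{k+1} = Y^k + C·X^{k+1}, with Y^0 = 0. Let {(X̲^k, Y̲^k)} satisfy X̲^{k+1} = D·(B X̲^k) − γ(∇f(B X̲^k) + Y̲^k) and Y̲^{k+1} = Y̲^k + (1/γ)·C·X̲^{k+1}, initialized with Y̲^0 = 0 and any X̲^0 such that B·X̲^0 = X^0. Then X^k = B·X̲^k and Y^k = γ·B·Y̲^k for all k ≥ 0. -/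
noncomputable section

open Matrix Finset

/-- Lemma 5, equivalent form of the algorithm for `G = 0`: the ABC
iterates `(X^k, Y^k)` and the underline iterates `(X̲^k, Y̲^k)` satisfy `X^k = B·X̲^k` and
`Y^k = γ·B·Y̲^k` for all `k ≥ 0`. -/
theorem statement_10
    (m d : ℕ) (γ : ℝ) (hγ : 0 < γ)
    (f : Fin m → Vec d → ℝ) (gf : Fin m → Vec d → Vec d)
    (hgrad : ∀ i, IsGradient (f i) (gf i))
    (A B C D : Matrix (Fin m) (Fin m) ℝ)
    (hA : A = B * D) (hBC : B * C = C * B)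
    (X Y : ℕ → Matrix (Fin m) (Fin d) ℝ)
    (hX : ∀ k, X (k + 1) = A * X k - γ • (B * gradMat gf (X k)) - Y k)
    (hY : ∀ k, Y (k + 1) = Y k + C * X (k + 1)) (hY0 : Y 0 = 0)
    (Xu Yu : ℕ → Matrix (Fin m) (Fin d) ℝ)
    (hXu : ∀ k, Xu (k + 1) = D * (B * Xu k) - γ • (gradMat gf (B * Xu k) + Yu k))
    (hYu : ∀ k, Yu (k + 1) = Yu k + (1 / γ) • (C * Xu (k + 1)))
    (hYu0 : Yu 0 = 0) (hinit : B * Xu 0 = X 0) :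
    ∀ k : ℕ, X k = B * Xu k ∧ Y k = γ • (B * Yu k) := by
  intro k
  induction k with
  | zero => exact ⟨hinit.symm, by simp [hY0, hYu0]⟩
  | succ k ih =>
    obtain ⟨hx, hy⟩ := ih
    have hx' : X (k + 1) = B * Xu (k + 1) := by
      rw [hX, hXu, hA, hx, hy]
      rw [Matrix.mul_sub, Matrix.mul_smul, Matrix.mul_add, Matrix.mul_assoc]
      rw [smul_add, sub_sub]
    refine ⟨hx', ?_⟩
    rw [hY, hYu, hy, hx']
    rw [Matrix.mul_add, smul_add, Matrix.mul_smul, smul_smul,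
      mul_one_div_cancel hγ.ne', one_smul, ← Matrix.mul_assoc, ← hBC, Matrix.mul_assoc]
end
end
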